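/- arXiv:2412.04196 — 10 statements merged into one kernel-verified Lean document; each statement's English description precedes it below -/
import Mathlib

section
/- For every number field K, the discriminant of K over ℚ is congruent to 0 or 1 modulo 4 (Stickelberger's theorem). -/
/-! Schur's argument. Write `det (σⱼ bᵢ) = P - N`, where `P` and `N` collect the Leibniz terms of
the even and of the odd permutations. An automorphism of `ℚ̄` permutes the embeddings `σⱼ`, hence
the columns, so it either fixes both `P` and `N` or swaps them. Thus `P + N` and `P * N` are
algebraic integers fixed by `Gal(ℚ̄/ℚ)`, i.e. rational integers `s` and `t`, and
`disc K = (P - N)² = s² - 4t ≡ 0, 1 (mod 4)`. -/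

open Finset NumberField Algebra

namespace Matrix

variable {ι R S : Type*} [Fintype ι] [DecidableEq ι] [CommRing R] [CommRing S]

def leibnizSum (M : Matrix ι ι R) (u : ℤˣ) : R :=
  ∑ π ∈ univ.filter (fun π : Equiv.Perm ι => π.sign = u), ∏ i, M (π i) i

theorem det_eq_leibnizSum_one_sub_leibnizSum_neg_one (M : Matrix ι ι R) :
    M.det = M.leibnizSum 1 - M.leibnizSum (-1) := by
  rw [det_apply, ← sum_filter_add_sum_filter_not univ (fun π => Equiv.Perm.sign π = 1),
    sub_eq_add_neg, leibnizSum, leibnizSum, ← sum_neg_distrib]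
  congr 1
  · refine sum_congr rfl fun π hπ => ?_
    rw [(mem_filter.mp hπ).2, one_smul]
  · refine sum_congr (filter_congr fun π _ => ?_) fun π hπ => ?_
    · rcases Int.units_eq_one_or π.sign with h | h <;> simp [h]
    · simp [(mem_filter.mp hπ).2]

theorem leibnizSum_submatrix_id (M : Matrix ι ι R) (ν : Equiv.Perm ι) (u : ℤˣ) :
    (M.submatrix id ν).leibnizSum u = M.leibnizSum (u * ν.sign) := by
  refine sum_equiv (Equiv.mulRight ν⁻¹) (fun π => ?_) fun π _ => ?_
  · simp [Equiv.Perm.sign_mul]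
  · calc ∏ i, M (π i) (ν i) = ∏ i, M ((π * ν⁻¹) (ν i)) (ν i) := by simp
      _ = _ := Equiv.prod_comp ν fun j => M ((π * ν⁻¹) j) j

theorem map_leibnizSum {F : Type*} [FunLike F R S] [RingHomClass F R S] (f : F)
    (M : Matrix ι ι R) (u : ℤˣ) :
    f (M.leibnizSum u) = (M.map f).leibnizSum u := by
  simp [leibnizSum]

theorem leibnizSum_add_submatrix_id (M : Matrix ι ι R) (ν : Equiv.Perm ι) :
    (M.submatrix id ν).leibnizSum 1 + (M.submatrix id ν).leibnizSum (-1) =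
      M.leibnizSum 1 + M.leibnizSum (-1) := by
  rcases Int.units_eq_one_or ν.sign with h | h <;>
    simp [leibnizSum_submatrix_id, h, add_comm]

theorem leibnizSum_mul_submatrix_id (M : Matrix ι ι R) (ν : Equiv.Perm ι) :
    (M.submatrix id ν).leibnizSum 1 * (M.submatrix id ν).leibnizSum (-1) =
      M.leibnizSum 1 * M.leibnizSum (-1) := by
  rcases Int.units_eq_one_or ν.sign with h | h <;>
    simp [leibnizSum_submatrix_id, h, mul_comm]

theorem isIntegral_leibnizSum {A : Type*} [CommRing A] [Algebra A R] (M : Matrix ι ι R)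
    (hM : ∀ i j, IsIntegral A (M i j)) (u : ℤˣ) : IsIntegral A (M.leibnizSum u) :=
  IsIntegral.sum _ fun _ _ => IsIntegral.prod _ fun _ _ => hM _ _

end Matrix

theorem InfiniteGalois.mem_range_algebraMap_of_isIntegral {R k E : Type*} [CommRing R]
    [IsIntegrallyClosed R] [Field k] [Algebra R k] [IsFractionRing R k] [Field E] [Algebra k E]
    [Algebra R E] [IsScalarTower R k E] [IsGalois k E] {x : E} (hx : IsIntegral R x)
    (hfix : ∀ σ : Gal(E/k), σ x = x) : x ∈ Set.range (algebraMap R E) := by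
  obtain ⟨q, rfl⟩ := (InfiniteGalois.mem_range_algebraMap_iff_fixed x).mpr hfix
  rw [isIntegral_algebraMap_iff (algebraMap k E).injective,
    IsIntegrallyClosed.isIntegral_iff] at hx
  obtain ⟨r, rfl⟩ := hx
  exact ⟨r, IsScalarTower.algebraMap_apply R k E r⟩

open Matrix in
theorem exists_det_sq_eq_sq_sub_four_mul {ι R k E : Type*} [Fintype ι] [DecidableEq ι]
    [CommRing R] [IsIntegrallyClosed R] [Field k] [Algebra R k] [IsFractionRing R k] [Field E] [Algebra k E]
    [Algebra R E] [IsScalarTower R k E] [IsGalois k E] (M : Matrix ι ι E)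
    (hint : ∀ i j, IsIntegral R (M i j))
    (hperm : ∀ σ : Gal(E/k), ∃ ν : Equiv.Perm ι, M.map σ = M.submatrix id ν) :
    ∃ s t : R, M.det ^ 2 = algebraMap R E (s ^ 2 - 4 * t) := by
  have hfix (f : Matrix ι ι E → E)
      (hf : ∀ ν : Equiv.Perm ι, f (M.submatrix id ν) = f M)
      (hmap : ∀ σ : Gal(E/k), σ (f M) = f (M.map σ)) (σ : Gal(E/k)) : σ (f M) = f M := by
    obtain ⟨ν, hν⟩ := hperm σ
    rw [hmap, hν, hf]
  obtain ⟨s, hs⟩ := InfiniteGalois.mem_range_algebraMap_of_isIntegral (k := k)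
    ((isIntegral_leibnizSum M hint 1).add (isIntegral_leibnizSum M hint (-1)))
    (hfix (fun N => N.leibnizSum 1 + N.leibnizSum (-1)) (leibnizSum_add_submatrix_id M)
      fun σ => by simp [map_leibnizSum])
  obtain ⟨t, ht⟩ := InfiniteGalois.mem_range_algebraMap_of_isIntegral (k := k)
    ((isIntegral_leibnizSum M hint 1).mul (isIntegral_leibnizSum M hint (-1)))
    (hfix (fun N => N.leibnizSum 1 * N.leibnizSum (-1)) (leibnizSum_mul_submatrix_id M)
      fun σ => by simp [map_leibnizSum])
  refine ⟨s, t, ?_⟩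
  rw [det_eq_leibnizSum_one_sub_leibnizSum_neg_one, map_sub, map_pow, map_mul, hs, ht, map_ofNat]
  ring

theorem Algebra.embeddingsMatrixReindex_map_algEquiv {A B C ι : Type*} [CommRing A] [CommRing B]
    [Algebra A B] [CommRing C] [Algebra A C] (b : ι → B) (e : ι ≃ (B →ₐ[A] C)) (σ : C ≃ₐ[A] C) :
    (embeddingsMatrixReindex A C b e).map σ =
      (embeddingsMatrixReindex A C b e).submatrix _root_.id
        (e.trans ((AlgEquiv.refl.arrowCongr σ).trans e.symm)) := by
  ext i j
  simp [embeddingsMatrixReindex, embeddingsMatrix]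

theorem NumberField.exists_discr_eq_sq_sub_four_mul (K : Type*) [Field K] [NumberField K] :
    ∃ s t : ℤ, discr K = s ^ 2 - 4 * t := by
  let E := AlgebraicClosure ℚ
  -- The default `DivisionRing.toRatAlgebra` is defeq to this instance only at default
  -- transparency, too deep for instance search to find `IsGalois ℚ E` through it.
  let : Algebra ℚ E := AlgebraicClosure.instAlgebra ℚ
  have hcard : Fintype.card (Module.Free.ChooseBasisIndex ℤ (𝓞 K)) =
      Fintype.card (K →ₐ[ℚ] E) := by
    rw [AlgHom.card, ← Module.finrank_eq_card_chooseBasisIndex, RingOfIntegers.rank]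
  let e := Fintype.equivOfCardEq hcard
  have hint (i j) : IsIntegral ℤ (embeddingsMatrixReindex ℚ E (integralBasis K) e i j) := by
    simpa [embeddingsMatrixReindex, embeddingsMatrix, integralBasis_apply] using
      (RingOfIntegers.isIntegral_coe _).map ((e j).restrictScalars ℤ)
  obtain ⟨s, t, hst⟩ := exists_det_sq_eq_sq_sub_four_mul (k := ℚ) _ hint
    fun σ => ⟨_, Algebra.embeddingsMatrixReindex_map_algEquiv _ e σ⟩
  refine ⟨s, t, (algebraMap ℤ E).injective_int ?_⟩
  rw [← hst, ← Algebra.discr_eq_det_embeddingsMatrixReindex_pow_two, ← coe_discr,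
    IsScalarTower.algebraMap_apply ℤ ℚ E]
  simp

theorem Int.sq_sub_four_mul_emod_four (s t : ℤ) :
    (s ^ 2 - 4 * t) % 4 = 0 ∨ (s ^ 2 - 4 * t) % 4 = 1 := by
  rcases Int.even_or_odd' s with ⟨k, rfl | rfl⟩
  · left; ring_nf; omega
  · right; ring_nf; omega

theorem stickelberger (K : Type*) [Field K] [NumberField K] :
    NumberField.discr K % 4 = 0 ∨ NumberField.discr K % 4 = 1 := by
  obtain ⟨s, t, h⟩ := NumberField.exists_discr_eq_sq_sub_four_mul K
  rw [h]
  exact Int.sq_sub_four_mul_emod_four s t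
end

section
/- Let A be a finite abelian group and S ⊆ A a generating subset. Let π : E → A be a surjective group homomorphism whose kernel is contained in the center of E and is isomorphic, as an abstract group, to ℚ/ℤ. Suppose that for every a ∈ S and every b ∈ A there exist lifts ã, b̃ ∈ E of a, b with ã·b̃ = b̃·ã. Then π admits a group-homomorphism section s : A → E with π ∘ s = id. -/
/-!
Since the kernel is central, whether two elements of `E` commute depends only on their images
in `A`. Hence every lift of a generator in `S` is central, so the center of `E` maps onto a
generating set of `A`, hence onto `A`; as it contains the kernel, it is all of `E`. Thus `E` is
abelian, and since `ℚ/ℤ` is divisible, i.e. an injective `ℤ`-module, the kernel is a direct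
summand of `E`; its complement maps isomorphically onto `A`.
-/

section CentralExtension

variable {E A : Type*} [Group E] [Group A] {π : E →* A}

theorem commute_of_commute_lifts (hcentral : π.ker ≤ Subgroup.center E) {e g ea eb : E}
    (hea : π ea = π e) (heb : π eb = π g) (h : Commute ea eb) : Commute e g := by
  have central : ∀ {x y : E}, π x = π y → ∀ z, Commute z (x⁻¹ * y) := fun hxy z =>
    Subgroup.mem_center_iff.mp (hcentral (π.eq_iff.mp hxy.symm)) z
  rw [← mul_inv_cancel_left ea e, ← mul_inv_cancel_left eb g]
  exact (h.mul_right (central heb ea)).mul_left (central hea _).symm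

theorem Subgroup.eq_top_of_ker_le_of_map_eq_top {H : Subgroup E} (hker : π.ker ≤ H)
    (hmap : H.map π = ⊤) : H = ⊤ := by
  rw [← sup_eq_left.mpr hker, ← Subgroup.comap_map_eq, hmap, Subgroup.comap_top]

theorem center_eq_top_of_commute_lifts {S : Set A} (hS : Subgroup.closure S = ⊤)
    (hsurj : Function.Surjective π) (hcentral : π.ker ≤ Subgroup.center E)
    (hcomm : ∀ a ∈ S, ∀ b : A, ∃ ea eb : E, π ea = a ∧ π eb = b ∧ ea * eb = eb * ea) :
    Subgroup.center E = ⊤ := by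
  have lift_mem_center : ∀ e : E, π e ∈ S → e ∈ Subgroup.center E := fun e he =>
    Subgroup.mem_center_iff.mpr fun g => by
      obtain ⟨ea, eb, hea, heb, h⟩ := hcomm (π e) he (π g)
      exact (commute_of_commute_lifts hcentral hea heb h).symm.eq
  refine Subgroup.eq_top_of_ker_le_of_map_eq_top hcentral (eq_top_iff.mpr ?_)
  rw [← hS, Subgroup.closure_le]
  intro a ha
  obtain ⟨e, rfl⟩ := hsurj a
  exact ⟨e, lift_mem_center e ha, rfl⟩

end CentralExtension

theorem Subgroup.exists_retraction_of_mulEquiv_divisible {E Q : Type*} [CommGroup E]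
    [AddCommGroup Q] [DivisibleBy Q ℤ] (K : Subgroup E) (φ : K ≃* Multiplicative Q) :
    ∃ r : E →* K, ∀ k : K, r k = k := by
  obtain ⟨g, hg⟩ := (Module.Baer.of_divisible Q).extension_property_addMonoidHom
    (MonoidHom.toAdditive K.subtype) K.subtype_injective
    (MonoidHom.toAdditiveLeft φ.toMonoidHom)
  refine ⟨φ.symm.toMonoidHom.comp (AddMonoidHom.toMultiplicativeRight g), fun k => ?_⟩
  have hgk : g (Additive.ofMul (k : E)) = (φ k).toAdd := DFunLike.congr_fun hg (Additive.ofMul k)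
  simp [hgk]

theorem MonoidHom.exists_section_of_retraction {E A : Type*} [CommGroup E] [Group A]
    {π : E →* A} (hsurj : Function.Surjective π) (r : E →* π.ker) (hr : ∀ k : π.ker, r k = k) :
    ∃ s : A →* E, π.comp s = MonoidHom.id A := by
  let ρ : E →* E := MonoidHom.id E / π.ker.subtype.comp r
  have hπρ : ∀ e, π (ρ e) = π e := fun e => by
    simp [ρ, π.mem_ker.mp (r e).2]
  have hker : π.ker ≤ ρ.ker := fun k hk => by
    simp [ρ, hr ⟨k, hk⟩]
  choose σ hσ using hsurj
  refine ⟨π.liftOfRightInverse σ hσ ⟨ρ, hker⟩, MonoidHom.ext fun a => ?_⟩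
  rw [← hσ a, MonoidHom.comp_apply, MonoidHom.liftOfRightInverse_comp_apply]
  exact hπρ _

theorem central_extension_splits_of_commuting_lifts_abelian_general
    (A E : Type*) [CommGroup A] [Group E]
    (S : Set A) (hS : Subgroup.closure S = ⊤)
    (π : E →* A) (hsurj : Function.Surjective π)
    (hcentral : π.ker ≤ Subgroup.center E)
    (hker : Nonempty (π.ker ≃* Multiplicative (ℚ ⧸ AddSubgroup.zmultiples (1 : ℚ))))
    (hcomm : ∀ a ∈ S, ∀ b : A, ∃ ea eb : E, π ea = a ∧ π eb = b ∧ ea * eb = eb * ea) :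
    ∃ s : A →* E, π.comp s = MonoidHom.id A := by
  obtain ⟨φ⟩ := hker
  have hcenter := center_eq_top_of_commute_lifts hS hsurj hcentral hcomm
  let : CommGroup E :=
    { mul_comm := fun x y => Subgroup.mem_center_iff.mp (hcenter ▸ Subgroup.mem_top y) x }
  -- `AddCircle (1 : ℚ)` unfolds to `ℚ ⧸ zmultiples 1` and carries the `DivisibleBy` instance.
  obtain ⟨r, hr⟩ := π.ker.exists_retraction_of_mulEquiv_divisible (Q := AddCircle (1 : ℚ)) φ
  exact π.exists_section_of_retraction hsurj r hr

theorem central_extension_splits_of_commuting_lifts_abelian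
    (A E : Type*) [CommGroup A] [Finite A] [Group E]
    (S : Set A) (hS : Subgroup.closure S = ⊤)
    (π : E →* A) (hsurj : Function.Surjective π)
    (hcentral : π.ker ≤ Subgroup.center E)
    (hker : Nonempty (π.ker ≃* Multiplicative (ℚ ⧸ AddSubgroup.zmultiples (1 : ℚ))))
    (hcomm : ∀ a ∈ S, ∀ b : A, ∃ ea eb : E, π ea = a ∧ π eb = b ∧ ea * eb = eb * ea) :
    ∃ s : A →* E, π.comp s = MonoidHom.id A :=
  central_extension_splits_of_commuting_lifts_abelian_general A E S hS π hsurj hcentral hker hcomm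
end

section
/- Let n ≥ 2 and let π : E → Sₙ be a surjective group homomorphism onto the symmetric group Sₙ whose kernel is contained in the center of E and is isomorphic, as an abstract group, to ℚ/ℤ. Suppose that for every transposition τ ∈ Sₙ and every σ ∈ Sₙ commuting with τ there exist lifts τ̃, σ̃ ∈ E of τ, σ with τ̃·σ̃ = σ̃·τ̃. Then π admits a group-homomorphism section s : Sₙ → E with π ∘ s = id. -/
/-!
Lift the adjacent transpositions `(i i+1)` to elements `a i` of `E` satisfying the Coxeter
relations of type `A`. Involutive lifts exist because the kernel is central and 2-divisible;
lifts of commuting elements commute as soon as some lifts do, which the hypothesis provides for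
distant transpositions; and the obstruction `(a i * a (i+1)) ^ 3` to the braid relation is
central and inverted by conjugation with `a i`, hence of order two, so multiplying `a (i+1)` by it
enforces the braid relation.

The subgroup `Kₘ` generated by such lifts maps isomorphically onto `S_{m+1}`. Writing `Kₖ` for
the subgroup generated by `a 0, …, a (k-1)`, the relations give `K_{k+1} = ⋃_{j ≤ k+1}
(a j ⋯ a k) Kₖ`; since `Kₖ` fixes `k + 1` while `a j ⋯ a k` moves it to `j`, an element of
`K_{k+1}` over the identity lies in `Kₖ`, and by induction it is trivial.
-/

open Equiv Fin.NatCast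

section Involutions

variable {E : Type*} [Group E] {x y : E}

theorem inv_eq_self_of_sq_eq_one (hx : x ^ 2 = 1) : x⁻¹ = x :=
  inv_eq_of_mul_eq_one_right (by rwa [← pow_two])

theorem braid_iff_mul_pow_three_eq_one (hx : x ^ 2 = 1) (hy : y ^ 2 = 1) :
    x * y * x = y * x * y ↔ (x * y) ^ 3 = 1 := by
  have hyxy : (y * x * y)⁻¹ = y * x * y := by
    rw [mul_inv_rev, mul_inv_rev, inv_eq_self_of_sq_eq_one hx, inv_eq_self_of_sq_eq_one hy,
      mul_assoc]
  rw [show (x * y) ^ 3 = x * y * x * (y * x * y) by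
    simp only [pow_succ, pow_zero, one_mul, mul_assoc], mul_eq_one_iff_eq_inv, hyxy]

theorem mul_pow_three_sq_eq_one (hx : x ^ 2 = 1) (hy : y ^ 2 = 1)
    (hz : (x * y) ^ 3 ∈ Subgroup.center E) : ((x * y) ^ 3) ^ 2 = 1 := by
  have hconj : x * (x * y) ^ 3 * x⁻¹ = ((x * y) ^ 3)⁻¹ := by
    have hxx : x * x = 1 := by rw [← pow_two, hx]
    rw [← conj_pow, ← inv_pow, mul_inv_rev, inv_eq_self_of_sq_eq_one hx,
      inv_eq_self_of_sq_eq_one hy]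
    simp only [← mul_assoc, hxx, one_mul]
  rw [Subgroup.mem_center_iff.mp hz x, mul_inv_cancel_right] at hconj
  rw [pow_two, mul_eq_one_iff_eq_inv, ← hconj]

theorem braid_of_mul_pow_three_mem_center (hx : x ^ 2 = 1) (hy : y ^ 2 = 1)
    (hz : (x * y) ^ 3 ∈ Subgroup.center E) :
    (y * (x * y) ^ 3) ^ 2 = 1 ∧
      x * (y * (x * y) ^ 3) * x = y * (x * y) ^ 3 * x * (y * (x * y) ^ 3) := by
  have hz2 := mul_pow_three_sq_eq_one hx hy hz
  have hcomm : ∀ g, Commute g ((x * y) ^ 3) := fun g => Subgroup.mem_center_iff.mp hz g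
  have hsq : (y * (x * y) ^ 3) ^ 2 = 1 := by rw [(hcomm y).mul_pow, hy, hz2, one_mul]
  refine ⟨hsq, (braid_iff_mul_pow_three_eq_one hx hsq).mpr ?_⟩
  calc (x * (y * (x * y) ^ 3)) ^ 3 = (x * y) ^ 3 * ((x * y) ^ 3) ^ 3 := by
        rw [← mul_assoc, (hcomm (x * y)).mul_pow]
    _ = (((x * y) ^ 3) ^ 2) ^ 2 := by rw [← pow_succ', ← pow_mul ((x * y) ^ 3) 2 2]
    _ = 1 := by rw [hz2, one_pow]

end Involutions

section CentralExtension

variable {E G : Type*} [Group E] [Group G] {π : E →* G}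

theorem Subgroup.exists_sq_eq_of_mulEquiv_ratModInt (K : Subgroup E)
    (e : K ≃* Multiplicative (ℚ ⧸ AddSubgroup.zmultiples (1 : ℚ))) :
    ∀ u ∈ K, ∃ v ∈ K, v ^ 2 = u := by
  intro u hu
  obtain ⟨r, hr⟩ := QuotientAddGroup.mk_surjective (Multiplicative.toAdd (e ⟨u, hu⟩))
  refine ⟨e.symm (Multiplicative.ofAdd (r / 2 : ℚ)), SetLike.coe_mem _, ?_⟩
  rw [← Subgroup.coe_pow, ← map_pow, pow_two, ← ofAdd_add, ← QuotientAddGroup.mk_add, add_halves,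
    hr, ofAdd_toAdd, MulEquiv.symm_apply_apply]

theorem commute_of_map_eq (hc : π.ker ≤ Subgroup.center E) {x y x' y' : E} (h : Commute x y)
    (hx : π x' = π x) (hy : π y' = π y) : Commute x' y' := by
  have central : ∀ {u}, π u = π 1 → ∀ g, Commute g u := fun hu g =>
    Subgroup.mem_center_iff.mp (hc (π.mem_ker.mpr (hu.trans (map_one π)))) g
  have hu : π (x⁻¹ * x') = π 1 := by rw [map_mul, map_inv, hx, inv_mul_cancel, map_one]
  have hv : π (y⁻¹ * y') = π 1 := by rw [map_mul, map_inv, hy, inv_mul_cancel, map_one]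
  rw [← mul_inv_cancel_left x x', ← mul_inv_cancel_left y y']
  exact (h.mul_right (central hv x)).mul_left (central hu _).symm

theorem exists_lift_sq_eq_one (hc : π.ker ≤ Subgroup.center E)
    (hdiv : ∀ u ∈ π.ker, ∃ v ∈ π.ker, v ^ 2 = u) {x : E} (hx : π x ^ 2 = 1) :
    ∃ y, π y = π x ∧ y ^ 2 = 1 := by
  obtain ⟨v, hv, hvx⟩ := hdiv (x ^ 2) (by rwa [π.mem_ker, map_pow])
  refine ⟨x * v⁻¹, by rw [map_mul, map_inv, π.mem_ker.mp hv, inv_one, mul_one], ?_⟩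
  have hxv : Commute x v⁻¹ := Subgroup.mem_center_iff.mp (hc (inv_mem hv)) x
  rw [hxv.mul_pow, inv_pow, hvx, mul_inv_cancel]

theorem mul_pow_three_mem_ker {x y : E} (hx : x ^ 2 = 1) (hy : y ^ 2 = 1)
    (h : π x * π y * π x = π y * π x * π y) : (x * y) ^ 3 ∈ π.ker := by
  rwa [π.mem_ker, map_pow, map_mul, ← braid_iff_mul_pow_three_eq_one] <;>
    simp only [← map_pow, hx, hy, map_one]

def braidCorrection (b : ℕ → E) : ℕ → E
  | 0 => b 0
  | i + 1 => b (i + 1) * (braidCorrection b i * b (i + 1)) ^ 3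

theorem map_braidCorrection_and_sq (hc : π.ker ≤ Subgroup.center E) {N : ℕ} {b : ℕ → E}
    (hb : ∀ i, b i ^ 2 = 1) (hbraid : ∀ i, i + 1 < N → π (b i) * π (b (i + 1)) * π (b i) =
      π (b (i + 1)) * π (b i) * π (b (i + 1))) :
    ∀ i < N, π (braidCorrection b i) = π (b i) ∧ braidCorrection b i ^ 2 = 1 := by
  intro i
  induction i with
  | zero => exact fun _ => ⟨rfl, hb 0⟩
  | succ i ih =>
    intro hi
    obtain ⟨hπ, hsq⟩ := ih (by omega)
    have hcube := mul_pow_three_mem_ker hsq (hb (i + 1)) (hπ ▸ hbraid i hi)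
    exact ⟨by rw [braidCorrection, map_mul, π.mem_ker.mp hcube, mul_one],
      (braid_of_mul_pow_three_mem_center hsq (hb (i + 1)) (hc hcube)).1⟩

theorem braidCorrection_braid (hc : π.ker ≤ Subgroup.center E) {N : ℕ} {b : ℕ → E}
    (hb : ∀ i, b i ^ 2 = 1) (hbraid : ∀ i, i + 1 < N → π (b i) * π (b (i + 1)) * π (b i) =
      π (b (i + 1)) * π (b i) * π (b (i + 1))) (i : ℕ) (hi : i + 1 < N) :
    braidCorrection b i * braidCorrection b (i + 1) * braidCorrection b i =
      braidCorrection b (i + 1) * braidCorrection b i * braidCorrection b (i + 1) := by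
  obtain ⟨hπ, hsq⟩ := map_braidCorrection_and_sq hc hb hbraid i (by omega)
  have hcube := mul_pow_three_mem_ker hsq (hb (i + 1)) (hπ ▸ hbraid i hi)
  exact (braid_of_mul_pow_three_mem_center hsq (hb (i + 1)) (hc hcube)).2

end CentralExtension

theorem Equiv.swap_braid {α : Type*} [DecidableEq α] {x y z : α} (hxy : x ≠ y) (hxz : x ≠ z)
    (hyz : y ≠ z) : swap x y * swap y z * swap x y = swap y z * swap x y * swap y z := by
  rw [swap_mul_swap_mul_swap hxy hxz, swap_comm x y, swap_comm y z,
    swap_mul_swap_mul_swap hyz.symm hxz.symm, swap_comm]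

section AdjacentSwaps

variable {m i j : ℕ}

theorem Fin.natCast_ne_natCast {a b : ℕ} (ha : a ≤ m) (hb : b ≤ m) (h : a ≠ b) :
    (a : Fin (m + 1)) ≠ b := by
  rwa [ne_eq, Fin.ext_iff, Fin.val_cast_of_lt (by omega), Fin.val_cast_of_lt (by omega)]

/-- Meaningful only for `i < m`: beyond that the casts wrap around modulo `m + 1`. -/
def adjSwap (m i : ℕ) : Perm (Fin (m + 1)) := swap (i : Fin (m + 1)) ((i + 1 : ℕ) : Fin (m + 1))

theorem adjSwap_sq (m i : ℕ) : adjSwap m i ^ 2 = 1 := by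
  rw [pow_two, adjSwap, swap_mul_self]

theorem isSwap_adjSwap (h : i < m) : (adjSwap m i).IsSwap :=
  ⟨_, _, Fin.natCast_ne_natCast (by omega) (by omega) (by omega), rfl⟩

theorem adjSwap_braid (h : i + 1 < m) :
    adjSwap m i * adjSwap m (i + 1) * adjSwap m i =
      adjSwap m (i + 1) * adjSwap m i * adjSwap m (i + 1) :=
  swap_braid (Fin.natCast_ne_natCast (by omega) (by omega) (by omega))
    (Fin.natCast_ne_natCast (by omega) (by omega) (by omega))
    (Fin.natCast_ne_natCast (by omega) (by omega) (by omega))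

theorem adjSwap_commute (hij : i + 1 < j) (hj : j < m) :
    Commute (adjSwap m i) (adjSwap m j) := by
  refine (Perm.disjoint_swap_swap ?_).commute
  simp only [List.nodup_cons, List.mem_cons, List.not_mem_nil, List.nodup_nil, or_false,
    not_or, not_false_eq_true, and_true]
  refine ⟨⟨?_, ?_, ?_⟩, ⟨?_, ?_⟩, ?_⟩ <;>
    exact Fin.natCast_ne_natCast (by omega) (by omega) (by omega)

theorem adjSwap_apply_of_lt {q : Fin (m + 1)} (h : i + 1 < q) : adjSwap m i q = q := by
  have hq := q.isLt
  refine swap_apply_of_ne_of_ne ?_ ?_ <;>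
  · rw [ne_eq, Fin.ext_iff, Fin.val_cast_of_lt (by omega)]
    omega

theorem adjSwap_val (k : Fin m) : adjSwap m k = swap k.castSucc k.succ := by
  rw [adjSwap, Nat.cast_succ, Fin.coe_eq_castSucc, Fin.coeSucc_eq_succ]

theorem closure_adjSwap : Subgroup.closure (adjSwap m '' Set.Iio m) = ⊤ := by
  refine Subgroup.closure_eq_top_of_mclosure_eq_top ?_
  rw [← Fin.range_val, ← Set.range_comp, ← Perm.mclosure_swap_castSucc_succ m]
  simp only [Function.comp_def, adjSwap_val]

end AdjacentSwaps

section CoxeterLift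

variable {E : Type*} [Group E]

def segProd {M : Type*} [Monoid M] (a : ℕ → M) (j d : ℕ) : M :=
  ((List.range' j d).map a).prod

theorem segProd_zero {M : Type*} [Monoid M] (a : ℕ → M) (j : ℕ) : segProd a j 0 = 1 := rfl

theorem segProd_succ {M : Type*} [Monoid M] (a : ℕ → M) (j d : ℕ) :
    segProd a j (d + 1) = a j * segProd a (j + 1) d := by
  simp [segProd, List.range'_succ]

def closureBelow (a : ℕ → E) (k : ℕ) : Subgroup E :=
  Subgroup.closure (a '' Set.Iio k)

theorem mem_closureBelow (a : ℕ → E) {i k : ℕ} (h : i < k) : a i ∈ closureBelow a k :=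
  Subgroup.subset_closure ⟨i, h, rfl⟩

/-- The union of the cosets `(a j ⋯ a k) * closureBelow a k` for `j ≤ k + 1`. -/
def segCosets (a : ℕ → E) (k : ℕ) : Set E :=
  {x | ∃ j ≤ k + 1, ∃ h ∈ closureBelow a k, x = segProd a j (k + 1 - j) * h}

structure IsCoxeterLift {m : ℕ} (π : E →* Perm (Fin (m + 1))) (a : ℕ → E) : Prop where
  map_eq : ∀ i < m, π (a i) = adjSwap m i
  sq_eq_one : ∀ i < m, a i ^ 2 = 1
  braid : ∀ i, i + 1 < m → a i * a (i + 1) * a i = a (i + 1) * a i * a (i + 1)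
  commute : ∀ i j, i + 1 < j → j < m → Commute (a i) (a j)

namespace IsCoxeterLift

variable {m : ℕ} {π : E →* Perm (Fin (m + 1))} {a : ℕ → E}

theorem commute_segProd (ha : IsCoxeterLift π a) {i j d : ℕ} (hij : i + 1 < j)
    (hjd : j + d ≤ m) : Commute (a i) (segProd a j d) := by
  induction d generalizing j with
  | zero => exact Commute.one_right _
  | succ d ih =>
    rw [segProd_succ]
    exact (ha.commute i j hij (by omega)).mul_right (ih (by omega) (by omega))

theorem mul_segProd_of_lt (ha : IsCoxeterLift π a) {i j d : ℕ} (hji : j < i) (hid : i < j + d)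
    (hdm : j + d ≤ m) : a i * segProd a j d = segProd a j d * a (i - 1) := by
  induction d generalizing j with
  | zero => omega
  | succ d ih =>
    rw [segProd_succ]
    rcases Nat.lt_or_ge (j + 1) i with hlt | hle
    · rw [← mul_assoc, (ha.commute j i hlt (by omega)).symm.eq, mul_assoc,
        ih hlt (by omega) (by omega), mul_assoc]
    · obtain rfl : i = j + 1 := by omega
      obtain ⟨d, rfl⟩ : ∃ d', d = d' + 1 := ⟨d - 1, by omega⟩
      have hcomm := ha.commute_segProd (i := j) (j := j + 1 + 1) (d := d) (by omega) (by omega)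
      rw [segProd_succ, Nat.add_sub_cancel]
      calc a (j + 1) * (a j * (a (j + 1) * segProd a (j + 1 + 1) d))
          = a (j + 1) * a j * a (j + 1) * segProd a (j + 1 + 1) d := by simp only [mul_assoc]
        _ = a j * a (j + 1) * a j * segProd a (j + 1 + 1) d := by rw [ha.braid j (by omega)]
        _ = a j * (a (j + 1) * segProd a (j + 1 + 1) d) * a j := by
          rw [mul_assoc _ (a j), hcomm.eq]
          simp only [mul_assoc]

theorem mul_segProd_mem_segCosets (ha : IsCoxeterLift π a) {i j k : ℕ} (hik : i ≤ k)
    (hkm : k < m) (hj : j ≤ k + 1) : a i * segProd a j (k + 1 - j) ∈ segCosets a k := by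
  rcases lt_trichotomy (i + 1) j with hlt | rfl | hgt
  · exact ⟨j, hj, a i, mem_closureBelow a (by omega),
      (ha.commute_segProd hlt (by omega)).eq⟩
  · refine ⟨i, by omega, 1, one_mem _, ?_⟩
    rw [mul_one, show k + 1 - i = k + 1 - (i + 1) + 1 by omega, segProd_succ]
  rcases Nat.lt_or_ge j i with hji | hij
  · exact ⟨j, hj, a (i - 1), mem_closureBelow a (by omega),
      ha.mul_segProd_of_lt hji (by omega) (by omega)⟩
  · obtain rfl : j = i := by omega
    refine ⟨j + 1, by omega, 1, one_mem _, ?_⟩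
    rw [mul_one, show k + 1 - j = k + 1 - (j + 1) + 1 by omega, segProd_succ, ← mul_assoc,
      ← pow_two, ha.sq_eq_one j (by omega), one_mul]

theorem mul_mem_segCosets (ha : IsCoxeterLift π a) {i k : ℕ} (hik : i ≤ k) (hkm : k < m)
    {x : E} (hx : x ∈ segCosets a k) : a i * x ∈ segCosets a k := by
  obtain ⟨j, hj, h, hh, rfl⟩ := hx
  obtain ⟨j', hj', h', hh', he⟩ := ha.mul_segProd_mem_segCosets hik hkm hj
  exact ⟨j', hj', h' * h, mul_mem hh' hh, by rw [← mul_assoc, he, mul_assoc]⟩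

theorem closureBelow_succ_subset (ha : IsCoxeterLift π a) {k : ℕ} (hkm : k < m) :
    (closureBelow a (k + 1) : Set E) ⊆ segCosets a k := by
  intro x hx
  induction hx using Subgroup.closure_induction_left with
  | one => exact ⟨k + 1, le_rfl, 1, one_mem _, by rw [Nat.sub_self, segProd_zero, mul_one]⟩
  | mul_left _ hg _ _ ih =>
    obtain ⟨i, hi, rfl⟩ := hg
    exact ha.mul_mem_segCosets (Nat.lt_succ_iff.mp hi) hkm ih
  | inv_mul_cancel _ hg _ _ ih =>
    obtain ⟨i, hi, rfl⟩ := hg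
    rw [inv_eq_self_of_sq_eq_one (ha.sq_eq_one i (hi.trans_le hkm))]
    exact ha.mul_mem_segCosets (Nat.lt_succ_iff.mp hi) hkm ih

theorem map_segProd_apply (ha : IsCoxeterLift π a) {j d : ℕ} (h : j + d ≤ m) :
    π (segProd a j d) ((j + d : ℕ) : Fin (m + 1)) = j := by
  induction d generalizing j with
  | zero => rw [segProd_zero, map_one, Perm.one_apply, add_zero]
  | succ d ih =>
    rw [segProd_succ, map_mul, Perm.mul_apply, show j + (d + 1) = j + 1 + d by omega,
      ih (by omega), ha.map_eq j (by omega), adjSwap, swap_apply_right]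

theorem map_apply_of_mem (ha : IsCoxeterLift π a) {k : ℕ} {q : Fin (m + 1)} (hq : k < q)
    {x : E} (hx : x ∈ closureBelow a k) : π x q = q := by
  suffices closureBelow a k ≤ (MulAction.stabilizer (Perm (Fin (m + 1))) q).comap π from
    this hx
  refine (Subgroup.closure_le _).mpr ?_
  rintro _ ⟨i, hi, rfl⟩
  have hq' := q.isLt
  simp only [Set.mem_Iio] at hi
  simp only [SetLike.mem_coe, Subgroup.mem_comap, MulAction.mem_stabilizer_iff, Perm.smul_def,
    ha.map_eq i (by omega)]
  exact adjSwap_apply_of_lt (by omega)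

theorem eq_one_of_mem_of_map_eq_one (ha : IsCoxeterLift π a) {k : ℕ} (hk : k ≤ m) {x : E}
    (hx : x ∈ closureBelow a k) (hπx : π x = 1) : x = 1 := by
  induction k generalizing x with
  | zero => simpa [closureBelow] using hx
  | succ k ih =>
    obtain ⟨j, hj, h, hh, rfl⟩ := ha.closureBelow_succ_subset hk hx
    have hfix : π h ((k + 1 : ℕ) : Fin (m + 1)) = ((k + 1 : ℕ) : Fin (m + 1)) :=
      ha.map_apply_of_mem (by rw [Fin.val_cast_of_lt (by omega)]; omega) hh
    have hseg := ha.map_segProd_apply (j := j) (d := k + 1 - j) (by omega)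
    rw [show j + (k + 1 - j) = k + 1 by omega] at hseg
    have hjk : j = k + 1 := by
      have := congrArg (· ((k + 1 : ℕ) : Fin (m + 1))) hπx
      simp only [map_mul, Perm.mul_apply, hfix, hseg, Perm.one_apply] at this
      by_contra hne
      exact Fin.natCast_ne_natCast (by omega) hk hne this
    rw [hjk, Nat.sub_self, segProd_zero, one_mul] at hπx ⊢
    exact ih (by omega) hh hπx

theorem map_closureBelow_eq_top (ha : IsCoxeterLift π a) : (closureBelow a m).map π = ⊤ := by
  rw [closureBelow, MonoidHom.map_closure, ← Set.image_comp, ← closure_adjSwap]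
  exact congrArg Subgroup.closure (Set.image_congr fun i hi => ha.map_eq i hi)

theorem exists_section (ha : IsCoxeterLift π a) :
    ∃ s : Perm (Fin (m + 1)) →* E, π.comp s = MonoidHom.id _ := by
  set K := closureBelow a m
  have hinj : Function.Injective (π.comp K.subtype) :=
    (injective_iff_map_eq_one _).mpr fun x hx =>
      Subtype.ext (ha.eq_one_of_mem_of_map_eq_one le_rfl x.2 hx)
  have hsurj : Function.Surjective (π.comp K.subtype) := fun σ => by
    obtain ⟨x, hx, rfl⟩ : σ ∈ K.map π := ha.map_closureBelow_eq_top ▸ Subgroup.mem_top σ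
    exact ⟨⟨x, hx⟩, rfl⟩
  let e := MulEquiv.ofBijective _ ⟨hinj, hsurj⟩
  exact ⟨K.subtype.comp e.symm.toMonoidHom, MonoidHom.ext e.apply_symm_apply⟩

end IsCoxeterLift

end CoxeterLift

theorem central_extension_splits_of_commuting_lifts_symmetric_general
    (n : ℕ) (E : Type*) [Group E]
    (π : E →* Equiv.Perm (Fin n)) (hsurj : Function.Surjective π)
    (hcentral : π.ker ≤ Subgroup.center E)
    (hker : Nonempty (π.ker ≃* Multiplicative (ℚ ⧸ AddSubgroup.zmultiples (1 : ℚ))))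
    (hcomm : ∀ τ σ : Equiv.Perm (Fin n), τ.IsSwap → τ * σ = σ * τ →
      ∃ et es : E, π et = τ ∧ π es = σ ∧ et * es = es * et) :
    ∃ s : Equiv.Perm (Fin n) →* E, π.comp s = MonoidHom.id (Equiv.Perm (Fin n)) := by
  obtain _ | m := n
  · exact ⟨1, MonoidHom.ext fun _ => Subsingleton.elim _ _⟩
  obtain ⟨e⟩ := hker
  have hdiv := π.ker.exists_sq_eq_of_mulEquiv_ratModInt e
  choose b hbπ hbsq using fun i => exists_lift_sq_eq_one hcentral hdiv
    (x := Function.surjInv hsurj (adjSwap m i)) (by rw [Function.surjInv_eq hsurj, adjSwap_sq])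
  replace hbπ : ∀ i, π (b i) = adjSwap m i := fun i => (hbπ i).trans (Function.surjInv_eq hsurj _)
  have hbraid : ∀ i, i + 1 < m → π (b i) * π (b (i + 1)) * π (b i) =
      π (b (i + 1)) * π (b i) * π (b (i + 1)) := fun i hi => by
    simpa only [hbπ] using adjSwap_braid hi
  have hcorr := map_braidCorrection_and_sq hcentral hbsq hbraid
  have hlift : ∀ i < m, π (braidCorrection b i) = adjSwap m i := fun i hi =>
    (hcorr i hi).1.trans (hbπ i)
  refine IsCoxeterLift.exists_section (a := braidCorrection b)
    ⟨hlift, fun i hi => (hcorr i hi).2, braidCorrection_braid hcentral hbsq hbraid,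
      fun i j hij hj => ?_⟩
  obtain ⟨et, es, het, hes, h⟩ := hcomm _ _ (isSwap_adjSwap (by omega : i < m))
    (adjSwap_commute hij hj)
  exact commute_of_map_eq hcentral h ((hlift i (by omega)).trans het.symm)
    ((hlift j hj).trans hes.symm)

theorem central_extension_splits_of_commuting_lifts_symmetric
    (n : ℕ) (hn : 2 ≤ n) (E : Type*) [Group E]
    (π : E →* Equiv.Perm (Fin n)) (hsurj : Function.Surjective π)
    (hcentral : π.ker ≤ Subgroup.center E)
    (hker : Nonempty (π.ker ≃* Multiplicative (ℚ ⧸ AddSubgroup.zmultiples (1 : ℚ))))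
    (hcomm : ∀ τ σ : Equiv.Perm (Fin n), τ.IsSwap → τ * σ = σ * τ →
      ∃ et es : E, π et = τ ∧ π es = σ ∧ et * es = es * et) :
    ∃ s : Equiv.Perm (Fin n) →* E, π.comp s = MonoidHom.id (Equiv.Perm (Fin n)) :=
  central_extension_splits_of_commuting_lifts_symmetric_general n E π hsurj hcentral hker hcomm
end

section
/- Let A₄ be the alternating group on 4 letters and let π : E → A₄ be a surjective group homomorphism whose kernel is contained in the center of E and is isomorphic, as an abstract group, to ℚ/ℤ. Suppose that for every element g ∈ A₄ of order 2 and every h ∈ A₄ commuting with g there exist lifts g̃, h̃ ∈ E of g, h with g̃·h̃ = h̃·g̃. Then π admits a group-homomorphism section s : A₄ → E with π ∘ s = id. -/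
/-!
Divisibility of `ℚ/ℤ` lets us lift the double transposition `x = (0 1)(2 3)` and the 3-cycle
`c = (0 1 2)` to elements `a` and `t` of `E` of orders 2 and 3. By hypothesis `a` commutes with
`b = t a t⁻¹`, a lift of `c x c⁻¹`. Conjugation by `t` then sends `b` to `a b w` for a central `w`;
conjugating three times returns `b w²`, so `w² = 1`, and `a w`, `b w`, `t` satisfy the defining
relations of `A₄ = V₄ ⋊ C₃`. These relations define a homomorphism `A₄ → E`, which is a section.
-/

open Equiv Function

theorem exists_monoidHom_comp_eq {ι G H : Type*} [Group G] [Group H] {e : ι → G}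
    (he : Bijective e) {m : ι → ι → ι} (hem : ∀ p q, e (m p q) = e p * e q) {F : ι → H}
    (hF : ∀ p q, F (m p q) = F p * F q) : ∃ f : G →* H, ⇑f ∘ e = F := by
  let e' := Equiv.ofBijective e he
  have he' (p : ι) : e'.symm (e p) = p := e'.symm_apply_apply p
  refine ⟨MonoidHom.mk' (F ∘ e'.symm) fun x y => ?_, funext fun p => congrArg F (he' p)⟩
  obtain ⟨p, rfl⟩ := he.2 x
  obtain ⟨q, rfl⟩ := he.2 y
  simp only [comp_apply, ← hem, he', hF]

section CentralExtension

variable {E G : Type*} [Group E] [Group G] {π : E →* G}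

theorem commute_of_commute_lifts_s6 (hπ : π.ker ≤ Subgroup.center E) {x y x' y' : E}
    (hx : π x' = π x) (hy : π y' = π y) (h : Commute x y) : Commute x' y' := by
  have central {z : E} (hz : π z = 1) (u : E) : Commute z u :=
    (Subgroup.mem_center_iff.1 (hπ hz) u).symm
  have hx' : x' = x * (x⁻¹ * x') := (mul_inv_cancel_left x x').symm
  have hy' : y' = y * (y⁻¹ * y') := (mul_inv_cancel_left y y').symm
  rw [hx', hy']
  refine (h.mul_right (central ?_ x).symm).mul_left (central ?_ _) <;> simp [hx, hy]

theorem exists_lift_pow_eq_one (hπ : π.ker ≤ Subgroup.center E) (hsurj : Surjective π) {n : ℕ}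
    (hroot : Surjective fun z : π.ker => z ^ n) {g : G} (hg : g ^ n = 1) :
    ∃ e : E, π e = g ∧ e ^ n = 1 := by
  obtain ⟨e, rfl⟩ := hsurj g
  obtain ⟨z, hz⟩ := hroot ⟨e ^ n, by simp [hg]⟩
  have hz' : (z : E) ^ n = e ^ n := congrArg Subtype.val hz
  have hze : Commute e z := Subgroup.mem_center_iff.1 (hπ z.2) e
  refine ⟨e * (z : E)⁻¹, by simp [MonoidHom.mem_ker.1 z.2], ?_⟩
  rw [(hze.inv_right).mul_pow, inv_pow, hz', mul_inv_cancel]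

end CentralExtension

theorem pow_surjective_of_mulEquiv {K M : Type*} [Monoid K] [Monoid M] (φ : K ≃* M) {n : ℕ}
    (h : Surjective fun x : M => x ^ n) : Surjective fun y : K => y ^ n := fun z => by
  obtain ⟨x, hx⟩ := h (φ z)
  exact ⟨φ.symm x, φ.injective (by simpa using hx)⟩

theorem ratModOne_pow_surjective {n : ℕ} (hn : n ≠ 0) :
    Surjective fun x : Multiplicative (ℚ ⧸ AddSubgroup.zmultiples (1 : ℚ)) => x ^ n := by
  intro x
  obtain ⟨q, hq⟩ := QuotientAddGroup.mk_surjective (Multiplicative.toAdd x)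
  refine ⟨Multiplicative.ofAdd (q / n : ℚ), ?_⟩
  dsimp only
  rw [← ofAdd_nsmul, ← QuotientAddGroup.mk_nsmul, nsmul_eq_mul,
    mul_div_cancel₀ _ (by exact_mod_cast hn), hq, ofAdd_toAdd]

/-- Defining relations of `A₄ = V₄ ⋊ C₃`, with `V₄ = {1, a, b, a b}` and `t` permuting
`a ↦ b ↦ a b` cyclically. -/
structure A4Relations {G : Type*} [Group G] (a b t : G) : Prop where
  fst_sq : a ^ 2 = 1
  commute : Commute a b
  pow_three : t ^ 3 = 1
  conj_fst : t * a * t⁻¹ = b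
  conj_snd : t * b * t⁻¹ = a * b

namespace A4Relations

/- Normal forms `klein a b i * t ^ j`: the index `i : Fin 4` records the exponents of `a` and `b`
as its two bits, so `^^^` is multiplication in `V₄`, and `kleinRot` is conjugation by `t`. -/

def klein {G : Type*} [Group G] (a b : G) : Fin 4 → G := ![1, a, b, a * b]

def kleinRot : Fin 4 → Fin 4 := ![0, 2, 3, 1]

def word {G : Type*} [Group G] (a b t : G) (p : Fin 4 × Fin 3) : G := klein a b p.1 * t ^ (p.2 : ℕ)

def semidirectMul (p q : Fin 4 × Fin 3) : Fin 4 × Fin 3 :=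
  (p.1 ^^^ kleinRot^[p.2] q.1, p.2 + q.2)

variable {G : Type*} [Group G] {a b t : G}

theorem snd_sq (h : A4Relations a b t) : b ^ 2 = 1 := by
  rw [← h.conj_fst, conj_pow, h.fst_sq, mul_one, mul_inv_cancel]

theorem klein_xor (h : A4Relations a b t) (i k : Fin 4) :
    klein a b (i ^^^ k) = klein a b i * klein a b k := by
  have ha : a * a = 1 := by rw [← sq, h.fst_sq]
  have hb : b * b = 1 := by rw [← sq, h.snd_sq]
  have hb' (x : G) : b * (b * x) = x := by rw [← mul_assoc, hb, one_mul]
  fin_cases i <;> fin_cases k <;>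
    simp [klein, mul_assoc, ha, hb, hb', h.commute.eq, h.commute.left_comm]

theorem conj_klein (h : A4Relations a b t) (i : Fin 4) :
    t * klein a b i * t⁻¹ = klein a b (kleinRot i) := by
  have hab : t * (a * b) * t⁻¹ = a :=
    calc t * (a * b) * t⁻¹ = (t * a * t⁻¹) * (t * b * t⁻¹) := by group
      _ = a := by
        rw [h.conj_fst, h.conj_snd, ← mul_assoc, ← h.commute.eq, mul_assoc, ← sq,
          h.snd_sq, mul_one]
  fin_cases i <;> simp [klein, kleinRot, h.conj_fst, h.conj_snd, hab]

theorem pow_mul_klein (h : A4Relations a b t) (n : ℕ) (i : Fin 4) :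
    t ^ n * klein a b i = klein a b (kleinRot^[n] i) * t ^ n := by
  induction n generalizing i with
  | zero => simp
  | succ n ih =>
    rw [Function.iterate_succ_apply', ← h.conj_klein, pow_succ', mul_assoc, ih]
    group

theorem word_semidirectMul (h : A4Relations a b t) (p q : Fin 4 × Fin 3) :
    word a b t (semidirectMul p q) = word a b t p * word a b t q := by
  obtain ⟨i, j⟩ := p
  obtain ⟨k, l⟩ := q
  have hpow : t ^ ((j + l : Fin 3) : ℕ) = t ^ (j : ℕ) * t ^ (l : ℕ) := by
    rw [Fin.val_add, ← pow_eq_pow_mod _ h.pow_three, pow_add]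
  calc word a b t (semidirectMul (i, j) (k, l))
      = klein a b i * (klein a b (kleinRot^[j] k) * t ^ (j : ℕ)) * t ^ (l : ℕ) := by
        simp only [word, semidirectMul, h.klein_xor, hpow, mul_assoc]
    _ = word a b t (i, j) * word a b t (k, l) := by
        rw [← h.pow_mul_klein]; simp only [word, mul_assoc]

theorem map_word {H : Type*} [Group H] (f : G →* H) (p : Fin 4 × Fin 3) :
    f (word a b t p) = word (f a) (f b) (f t) p := by
  obtain ⟨i, j⟩ := p
  fin_cases i <;> simp [word, klein]

end A4Relations

theorem A4Relations.of_central_defect {G : Type*} [Group G] {a b t w : G} (ha : a ^ 2 = 1)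
    (hab : Commute a b) (ht : t ^ 3 = 1) (hta : t * a * t⁻¹ = b) (hw : w ∈ Subgroup.center G)
    (htb : t * b * t⁻¹ = a * b * w) : A4Relations (a * w) (b * w) t := by
  have hwc (x : G) : Commute w x := (Subgroup.mem_center_iff.1 hw x).symm
  have hconj (x y : G) : t * (x * y) * t⁻¹ = t * x * t⁻¹ * (t * y * t⁻¹) := conj_mul.symm
  have htw : t * w * t⁻¹ = w := by rw [← (hwc t).eq, mul_inv_cancel_right]
  have hbab : b * (a * b) = a := by
    rw [← mul_assoc, ← hab.eq, mul_assoc, ← sq, ← hta, conj_pow, ha, mul_one, mul_inv_cancel,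
      mul_one]
  -- conjugation by `t` fixes `w`, so conjugating `b` three times gives `b w²`
  have hw2 : w ^ 2 = 1 := by
    have hb : b = b * (w * w) :=
      calc b = t ^ 3 * b * (t ^ 3)⁻¹ := by rw [ht, one_mul, inv_one, mul_one]
        _ = t * (t * (t * b * t⁻¹) * t⁻¹) * t⁻¹ := by
          simp only [pow_succ, pow_zero, one_mul, mul_inv_rev, mul_assoc]
        _ = b * (w * w) := by
          rw [htb, hconj (a * b) w, hconj a b, hta, htb, htw, ← mul_assoc b, hbab,
            hconj (a * w) w, hconj a w, hta, htw, mul_assoc]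
    simpa [sq] using hb
  refine ⟨?_, (hab.mul_right (hwc a).symm).mul_left (hwc _), ht, ?_, ?_⟩
  · rw [(hwc a).symm.mul_pow, ha, hw2, mul_one]
  · rw [hconj, hta, htw]
  · rw [hconj, htb, htw]
    simp only [mul_assoc, (hwc b).left_comm]

local notation "A₄" => alternatingGroup (Fin 4)

namespace A4

def dblTransp₁ : A₄ := ⟨swap 0 1 * swap 2 3, by rw [Perm.mem_alternatingGroup]; decide⟩

def dblTransp₂ : A₄ := ⟨swap 0 3 * swap 1 2, by rw [Perm.mem_alternatingGroup]; decide⟩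

def threeCycle : A₄ := ⟨swap 0 1 * swap 1 2, by rw [Perm.mem_alternatingGroup]; decide⟩

theorem a4Relations : A4Relations dblTransp₁ dblTransp₂ threeCycle :=
  ⟨by decide, show _ * _ = _ * _ by decide, by decide, by decide, by decide⟩

theorem orderOf_dblTransp₁ : orderOf dblTransp₁ = 2 :=
  orderOf_eq_prime a4Relations.fst_sq (by decide)

theorem word_bijective : Bijective (A4Relations.word dblTransp₁ dblTransp₂ threeCycle) := by
  decide

theorem hom_ext {G : Type*} [Group G] {f g : A₄ →* G} (h₁ : f dblTransp₁ = g dblTransp₁)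
    (hc : f threeCycle = g threeCycle) : f = g := by
  have h₂ : f dblTransp₂ = g dblTransp₂ := by simp [← a4Relations.conj_fst, h₁, hc]
  refine MonoidHom.ext fun x => ?_
  obtain ⟨p, rfl⟩ := word_bijective.2 x
  rw [A4Relations.map_word, A4Relations.map_word, h₁, h₂, hc]

end A4

open A4

theorem A4Relations.exists_monoidHom {G : Type*} [Group G] {a b t : G} (h : A4Relations a b t) :
    ∃ f : A₄ →* G, f dblTransp₁ = a ∧ f threeCycle = t := by
  obtain ⟨f, hf⟩ :=
    exists_monoidHom_comp_eq word_bijective a4Relations.word_semidirectMul h.word_semidirectMul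
  exact ⟨f, by simpa [word, klein] using congrFun hf (1, 0),
    by simpa [word, klein] using congrFun hf (0, 1)⟩

theorem central_extension_splits_of_commuting_lifts_A4
    (E : Type*) [Group E]
    (π : E →* alternatingGroup (Fin 4)) (hsurj : Function.Surjective π)
    (hcentral : π.ker ≤ Subgroup.center E)
    (hker : Nonempty (π.ker ≃* Multiplicative (ℚ ⧸ AddSubgroup.zmultiples (1 : ℚ))))
    (hcomm : ∀ g h : alternatingGroup (Fin 4), orderOf g = 2 → g * h = h * g →
      ∃ eg eh : E, π eg = g ∧ π eh = h ∧ eg * eh = eh * eg) :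
    ∃ s : alternatingGroup (Fin 4) →* E, π.comp s = MonoidHom.id (alternatingGroup (Fin 4)) := by
  obtain ⟨φ⟩ := hker
  have hroot {n : ℕ} (hn : n ≠ 0) := pow_surjective_of_mulEquiv φ (ratModOne_pow_surjective hn)
  obtain ⟨a, hπa, ha⟩ :=
    exists_lift_pow_eq_one hcentral hsurj (hroot two_ne_zero) a4Relations.fst_sq
  obtain ⟨t, hπt, ht⟩ :=
    exists_lift_pow_eq_one hcentral hsurj (hroot three_ne_zero) a4Relations.pow_three
  set b := t * a * t⁻¹
  have hπb : π b = dblTransp₂ := by simp [b, hπa, hπt, a4Relations.conj_fst]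
  have hab : Commute a b := by
    obtain ⟨e₁, e₂, he₁, he₂, he⟩ := hcomm _ _ orderOf_dblTransp₁ a4Relations.commute
    exact commute_of_commute_lifts_s6 hcentral (hπa.trans he₁.symm) (hπb.trans he₂.symm) he
  set w := (a * b)⁻¹ * (t * b * t⁻¹)
  have hπw : π w = 1 := by simp [w, hπa, hπb, hπt, a4Relations.conj_snd]
  obtain ⟨f, hfa, hft⟩ := (A4Relations.of_central_defect ha hab ht rfl (hcentral hπw)
    (mul_inv_cancel_left _ _).symm).exists_monoidHom
  exact ⟨f, hom_ext (by simp [hfa, hπa, hπw]) (by simp [hft, hπt])⟩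
end

section
/- Let π : E → G be a surjective group homomorphism with kernel contained in the center of E, and let g, h ∈ G commute. Then: (i) for any lifts g̃, h̃ ∈ E of g, h, the commutator [g̃,h̃] = g̃·h̃·g̃⁻¹·h̃⁻¹ lies in ker π and is independent of the choice of lifts; (ii) if moreover every element of ker π has an n-th root in ker π for every n ≥ 1 (for instance if ker π ≅ ℚ/ℤ), then the restriction of π over the subgroup ⟨g,h⟩ generated by g and h, i.e. the map π⁻¹(⟨g,h⟩) → ⟨g,h⟩, admits a group-homomorphism section if and only if [g̃,h̃] = 1. -/
/-!
Changing the lifts multiplies them by central elements, which does not change the commutator. A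
section over `⟨g, h⟩` provides commuting lifts. Conversely, if `g₁` and `h₁` commute, then
`π⁻¹⟨g, h⟩`, generated by `g₁`, `h₁` and the central kernel, is abelian. Its kernel is divisible,
hence an injective `ℤ`-module (Baer), so it admits a retraction `r`, and `x ↦ x * (r x)⁻¹` kills the
kernel and descends to a section.
-/

open scoped commutatorElement

theorem commutatorElement_mul_mul_of_mem_center {E : Type*} [Group E] (a b : E) {z w : E}
    (hz : z ∈ Subgroup.center E) (hw : w ∈ Subgroup.center E) : ⁅a * z, b * w⁆ = ⁅a, b⁆ := by
  have hz₁ (x : E) : ⁅z, x⁆ = 1 :=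
    commutatorElement_eq_one_iff_commute.mpr (Subgroup.mem_center_iff.mp hz x).symm
  have hw₁ (x : E) : ⁅x, w⁆ = 1 :=
    commutatorElement_eq_one_iff_commute.mpr (Subgroup.mem_center_iff.mp hw x)
  simp [commutatorElement_mul_left_eq_conj_mul, commutatorElement_mul_right_eq_mul_conj, hz₁, hw₁]

namespace MonoidHom

variable {E G : Type*} [Group E] [Group G] (π : E →* G)

theorem commutatorElement_eq_of_map_eq (hcentral : π.ker ≤ Subgroup.center E) {a b a' b' : E}
    (ha : π a = π a') (hb : π b = π b') : ⁅a, b⁆ = ⁅a', b'⁆ := by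
  rw [← mul_inv_cancel_left a a', ← mul_inv_cancel_left b b']
  exact (commutatorElement_mul_mul_of_mem_center a b (hcentral (π.eq_iff.mp ha.symm))
    (hcentral (π.eq_iff.mp hb.symm))).symm

theorem isMulCommutative_comap_closure_image (hcentral : π.ker ≤ Subgroup.center E) {s : Set E}
    (hs : ∀ x ∈ s, ∀ y ∈ s, x * y = y * x) :
    IsMulCommutative ((Subgroup.closure (π '' s)).comap π) := by
  rw [← MonoidHom.map_closure, Subgroup.comap_map_eq, ← Subgroup.closure_eq π.ker,
    ← Subgroup.closure_union]
  refine Subgroup.isMulCommutative_closure ?_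
  rintro x hx y (hy | hy)
  · rcases hx with hx | hx
    · exact hs x hx y hy
    · exact (Subgroup.mem_center_iff.mp (hcentral hx) y).symm
  · exact Subgroup.mem_center_iff.mp (hcentral hy) x

theorem exists_commute_lifts_of_comp_eq_id {H : Subgroup G} (s : H →* H.comap π)
    (hs : (π.subgroupComap H).comp s = MonoidHom.id H) {x y : G} (hx : x ∈ H) (hy : y ∈ H)
    (hxy : Commute x y) : ∃ x' y', π x' = x ∧ π y' = y ∧ Commute x' y' := by
  have hπs (z : H) : π (s z) = z := congr(Subtype.val ($hs z))
  refine ⟨s ⟨x, hx⟩, s ⟨y, hy⟩, hπs _, hπs _, ?_⟩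
  have hxy' : Commute (⟨x, hx⟩ : H) ⟨y, hy⟩ := Subtype.ext hxy
  exact (hxy'.map s).map (H.comap π).subtype

end MonoidHom

def Subgroup.IsRootable {M : Type*} [Group M] (K : Subgroup M) : Prop :=
  ∀ x ∈ K, ∀ n : ℕ, n ≠ 0 → ∃ y ∈ K, y ^ n = x

open scoped IsMulCommutative in
theorem Subgroup.IsRootable.exists_retraction {M : Type*} [Group M] [IsMulCommutative M]
    {K : Subgroup M} (hK : K.IsRootable) : ∃ r : M →* K, r.comp K.subtype = MonoidHom.id K := by
  have : DivisibleBy (Additive K) ℕ := divisibleByOfSMulRightSurj _ _ fun {n} hn x => by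
    obtain ⟨y, hy, hyx⟩ := hK x.toMul x.toMul.2 n hn
    exact ⟨.ofMul ⟨y, hy⟩, congrArg Additive.ofMul (Subtype.ext hyx)⟩
  have : DivisibleBy (Additive K) ℤ := AddGroup.divisibleByIntOfDivisibleByNat _
  obtain ⟨r, hr⟩ := (Module.Baer.of_divisible (Additive K)).extension_property_addMonoidHom
    K.subtype.toAdditive Subtype.val_injective (AddMonoidHom.id _)
  exact ⟨MonoidHom.toAdditive.symm r, congrArg MonoidHom.toAdditive.symm hr⟩

theorem Subgroup.IsRootable.ker_subgroupComap {G G' : Type*} [Group G] [Group G'] {f : G →* G'}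
    (hf : f.ker.IsRootable) (H' : Subgroup G') : (f.subgroupComap H').ker.IsRootable := by
  have hmem (z : H'.comap f) : z ∈ (f.subgroupComap H').ker ↔ (z : G) ∈ f.ker := by
    rw [MonoidHom.mem_ker, MonoidHom.mem_ker, ← OneMemClass.coe_eq_one]
    rfl
  intro x hx n hn
  obtain ⟨y, hy, hyx⟩ := hf x ((hmem x).mp hx) n hn
  have hyH' : y ∈ H'.comap f := by simp [f.mem_ker.mp hy]
  exact ⟨⟨y, hyH'⟩, (hmem _).mpr hy, Subtype.ext hyx⟩

open scoped IsMulCommutative in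
theorem MonoidHom.exists_rightInverse_of_isRootable_ker {M N : Type*} [Group M]
    [IsMulCommutative M] [Group N] (q : M →* N) (hq : Function.Surjective q)
    (hroot : q.ker.IsRootable) : ∃ s : N →* M, q.comp s = MonoidHom.id N := by
  obtain ⟨r, hr⟩ := hroot.exists_retraction
  set σ : M →* M := MonoidHom.id M / q.ker.subtype.comp r
  have hσ : q.ker ≤ σ.ker := fun x hx => by
    simp [σ, show r x = ⟨x, hx⟩ from congr($hr ⟨x, hx⟩)]
  refine ⟨q.liftOfSurjective hq ⟨σ, hσ⟩, (MonoidHom.cancel_right hq).mp ?_⟩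
  ext x
  simpa [σ] using q.mem_ker.mp (r x).2

theorem commutator_of_lifts_and_splitting_criterion
    (E G : Type*) [Group E] [Group G] (π : E →* G)
    (hsurj : Function.Surjective π) (hcentral : π.ker ≤ Subgroup.center E)
    (g h : G) (hgh : g * h = h * g) :
    (∀ g₁ h₁ g₂ h₂ : E, π g₁ = g → π h₁ = h → π g₂ = g → π h₂ = h →
      ⁅g₁, h₁⁆ ∈ π.ker ∧ ⁅g₁, h₁⁆ = ⁅g₂, h₂⁆) ∧
    ((∀ x ∈ π.ker, ∀ n : ℕ, 1 ≤ n → ∃ y ∈ π.ker, y ^ n = x) →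
      ∀ g₁ h₁ : E, π g₁ = g → π h₁ = h →
        ((∃ s : Subgroup.closure {g, h} →* Subgroup.comap π (Subgroup.closure {g, h}),
            (π.subgroupComap (Subgroup.closure {g, h})).comp s =
              MonoidHom.id (Subgroup.closure {g, h})) ↔ ⁅g₁, h₁⁆ = 1)) := by
  refine ⟨fun g₁ h₁ g₂ h₂ hg₁ hh₁ hg₂ hh₂ => ⟨?_, ?_⟩, fun hroot g₁ h₁ hg₁ hh₁ => ⟨?_, ?_⟩⟩
  · rw [π.mem_ker, map_commutatorElement, hg₁, hh₁, commutatorElement_eq_one_iff_mul_comm]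
    exact hgh
  · exact π.commutatorElement_eq_of_map_eq hcentral (hg₁.trans hg₂.symm) (hh₁.trans hh₂.symm)
  · rintro ⟨s, hs⟩
    obtain ⟨g₂, h₂, hg₂, hh₂, hcomm⟩ := π.exists_commute_lifts_of_comp_eq_id s hs
      (Subgroup.subset_closure (by simp)) (Subgroup.subset_closure (by simp)) hgh
    rw [π.commutatorElement_eq_of_map_eq hcentral (hg₁.trans hg₂.symm) (hh₁.trans hh₂.symm)]
    exact commutatorElement_eq_one_iff_commute.mpr hcomm
  · intro hc
    have hcomm : IsMulCommutative ((Subgroup.closure {g, h}).comap π) := by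
      rw [← hg₁, ← hh₁, ← Set.image_pair]
      refine π.isMulCommutative_comap_closure_image hcentral ?_
      rintro _ (rfl | rfl) _ (rfl | rfl) <;> simp_all [commutatorElement_eq_one_iff_mul_comm]
    have hker : π.ker.IsRootable := fun x hx n hn => hroot x hx n (Nat.one_le_iff_ne_zero.mpr hn)
    exact (π.subgroupComap _).exists_rightInverse_of_isRootable_ker
      (π.subgroupComap_surjective_of_surjective _ hsurj) (hker.ker_subgroupComap _)
end

section
/- Let G be a finite abelian group with |G| > 1, embedded in the symmetric group Sym(G) by the regular representation (each g acts on G by translation), and for g ∈ G set ind(g) = |G| − (number of orbits of the cyclic group ⟨g⟩ acting on G by translation). Then ind(g) = |G|·(1 − 1/ord(g)) for every g; the minimum of ind over non-identity elements of G equals |G|·(1 − 1/Q), where Q is the smallest prime divisor of |G|, and is attained exactly at the elements of order Q. Moreover, the subgroup of G generated by the elements of order Q is the Q-torsion subgroup G[Q], and this subgroup equals G if and only if G has exponent Q. -/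
/-- The index of an element `g` of a finite group `G` embedded in `Sym(G)` via the
regular representation:
`ind(g) = |G| − (number of orbits of ⟨g⟩ acting on G by translation)`. -/
noncomputable def regIndex {G : Type*} [Group G] (g : G) : ℕ :=
  Nat.card G - Nat.card (MulAction.orbitRel.Quotient (Subgroup.zpowers g) G)

/-! Translation is a free action, so the orbits of `⟨g⟩` on `G` are its cosets and there are
`|G| / ord(g)` of them. As `m ↦ |G|(1 - 1/m)` is strictly increasing and every non-identity
element has order a divisor `> 1` of `|G|`, hence `≥ Q`, the minimum is taken exactly at the
elements of order `Q`, which exist by Cauchy's theorem. A non-identity element of `G[Q]` has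
prime order `Q`, and `G[Q] = G` says that the exponent divides `Q`. -/

open MulAction

theorem card_orbitRel_quotient_subgroup_eq_index {G : Type*} [Group G] (H : Subgroup G) :
    Nat.card (orbitRel.Quotient H G) = H.index :=
  Nat.card_congr (equivSubgroupOrbitsQuotientGroup (x := (1 : G)) H)

theorem index_zpowers_eq_card_div_orderOf {G : Type*} [Group G] [Finite G] (g : G) :
    (Subgroup.zpowers g).index = Nat.card G / orderOf g := by
  rw [← (Subgroup.zpowers g).card_mul_index, Nat.card_zpowers,
    Nat.mul_div_cancel_left _ (orderOf_pos g)]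

theorem regIndex_eq {G : Type*} [Group G] [Finite G] (g : G) :
    regIndex g = Nat.card G - Nat.card G / orderOf g := by
  rw [regIndex, card_orbitRel_quotient_subgroup_eq_index, index_zpowers_eq_card_div_orderOf]

theorem cast_regIndex {K G : Type*} [Field K] [CharZero K] [Group G] [Finite G] (g : G) :
    (regIndex g : K) = Nat.card G * (1 - 1 / orderOf g) := by
  have hord : (orderOf g : K) ≠ 0 := by exact_mod_cast (orderOf_pos g).ne'
  rw [regIndex_eq, Nat.cast_sub (Nat.div_le_self _ _),
    Nat.cast_div_charZero (orderOf_dvd_natCard g)]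
  field_simp

theorem strictMonoOn_mul_one_sub_one_div {K : Type*} [Field K] [LinearOrder K]
    [IsStrictOrderedRing K] {c : K} (hc : 0 < c) :
    StrictMonoOn (fun x : K => c * (1 - 1 / x)) (Set.Ioi 0) := fun x hx y hy hxy => by
  have := inv_strictAntiOn hx hy hxy
  simp only [one_div]
  nlinarith

theorem minFac_card_le_orderOf {G : Type*} [Group G] [Finite G] {g : G} (hg : g ≠ 1) :
    (Nat.card G).minFac ≤ orderOf g :=
  Nat.minFac_le_of_dvd (lt_of_le_of_ne (orderOf_pos g) (Ne.symm (mt orderOf_eq_one_iff.mp hg)))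
    (orderOf_dvd_natCard g)

theorem closure_setOf_orderOf_eq_prime {G : Type*} [CommGroup G] {p : ℕ} (hp : p.Prime) :
    Subgroup.closure {g : G | orderOf g = p} = (powMonoidHom p : G →* G).ker := by
  apply le_antisymm
  · rw [Subgroup.closure_le]
    rintro g rfl
    exact pow_orderOf_eq_one g
  · intro g hg
    rcases (Nat.dvd_prime hp).mp (orderOf_dvd_of_pow_eq_one hg) with h | h
    · rw [orderOf_eq_one_iff.mp h]
      exact Subgroup.one_mem _
    · exact Subgroup.subset_closure h

theorem ker_powMonoidHom_eq_top_iff {G : Type*} [CommGroup G] [Nontrivial G] {p : ℕ}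
    (hp : p.Prime) : (powMonoidHom p : G →* G).ker = ⊤ ↔ Monoid.exponent G = p := by
  have hexp : Monoid.exponent G ≠ 1 := mt Monoid.exp_eq_one_iff.mp (not_subsingleton G)
  rw [MonoidHom.ker_eq_top_iff, DFunLike.ext_iff]
  simp only [powMonoidHom_apply, MonoidHom.one_apply]
  rw [← Monoid.exponent_dvd_iff_forall_pow_eq_one, Nat.dvd_prime hp, or_iff_right hexp]

theorem regIndex_abelian (G : Type*) [CommGroup G] [Finite G] (hG : 1 < Nat.card G) :
    (∀ g : G, (regIndex g : ℚ) = (Nat.card G : ℚ) * (1 - 1 / (orderOf g : ℚ))) ∧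
    (∃ g : G, orderOf g = (Nat.card G).minFac) ∧
    (∀ g : G, g ≠ 1 →
      ((Nat.card G : ℚ) * (1 - 1 / ((Nat.card G).minFac : ℚ)) ≤ (regIndex g : ℚ) ∧
        ((regIndex g : ℚ) = (Nat.card G : ℚ) * (1 - 1 / ((Nat.card G).minFac : ℚ)) ↔
          orderOf g = (Nat.card G).minFac))) ∧
    Subgroup.closure {g : G | orderOf g = (Nat.card G).minFac} =
      (powMonoidHom (Nat.card G).minFac : G →* G).ker ∧
    ((powMonoidHom (Nat.card G).minFac : G →* G).ker = ⊤ ↔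
      Monoid.exponent G = (Nat.card G).minFac) := by
  have : Nontrivial G := Finite.one_lt_card_iff_nontrivial.mp hG
  have hQ : (Nat.card G).minFac.Prime := Nat.minFac_prime hG.ne'
  have : Fact (Nat.card G).minFac.Prime := ⟨hQ⟩
  have hmono := strictMonoOn_mul_one_sub_one_div (K := ℚ) (c := Nat.card G) (by positivity)
  refine ⟨cast_regIndex, exists_prime_orderOf_dvd_card' _ (Nat.minFac_dvd _),
    fun g hg => ?_, closure_setOf_orderOf_eq_prime hQ, ker_powMonoidHom_eq_top_iff hQ⟩
  have hQpos : ((Nat.card G).minFac : ℚ) ∈ Set.Ioi 0 := by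
    simpa using hQ.pos
  have hordpos : (orderOf g : ℚ) ∈ Set.Ioi 0 := by
    simpa using orderOf_pos g
  rw [cast_regIndex, hmono.le_iff_le hQpos hordpos, hmono.injOn.eq_iff hordpos hQpos]
  exact ⟨by exact_mod_cast minFac_card_le_orderOf hg, Nat.cast_inj⟩
end

section
/- Let n ≥ 3 be an odd integer, d a squarefree divisor of n with d ≡ 3 (mod 4), and m a divisor of n with d ∣ m. For r ∈ (ℤ/nℤ)ˣ set χ_d(r) = (r|d), the Jacobi symbol, which is well defined since d ∣ n. Then the map f : (ℤ/nℤ)ˣ → (ℤ/mℤ)ˣ defined by f(r) = χ_d(r)·(r mod m) is a group homomorphism whose image is a subgroup of index 2 in (ℤ/mℤ)ˣ. -/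
/-!
Write `π : (ℤ/nℤ)ˣ → (ℤ/mℤ)ˣ` for reduction and `ψ = χ_d` on `(ℤ/mℤ)ˣ`, so `f r = ψ(π r) · π r`.
Since `d ≡ 3 (mod 4)`, `ψ(-1) = -1`; hence `ψ(f r) = ψ(π r)² = 1`, and conversely `f` agrees
with the surjection `π` on `π⁻¹(ker ψ)`. So the image of `f` is `ker ψ`, which has index 2
because `ψ` is onto `{±1}`.
-/

open Function

namespace MonoidHom

variable {G H : Type*} [Group G] [CommGroup H]

theorem range_mul_comp_eq_ker {π : G →* H} (hπ : Surjective π) {ψ : H →* ℤˣ} {j : ℤˣ →* H}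
    (hj : LeftInverse ψ j) : ((j.comp (ψ.comp π)) * π).range = ψ.ker := by
  ext s
  simp only [mem_range, mem_ker, mul_apply, comp_apply]
  constructor
  · rintro ⟨g, rfl⟩
    rw [map_mul, hj, Int.units_mul_self]
  · intro hs
    obtain ⟨g, rfl⟩ := hπ s
    exact ⟨g, by rw [hs, map_one, one_mul]⟩

theorem index_ker_eq_two {ψ : H →* ℤˣ} (hψ : Surjective ψ) : ψ.ker.index = 2 := by
  rw [Subgroup.index_ker, range_eq_top.mpr hψ, Subgroup.card_top, Nat.card_eq_fintype_card,
    Fintype.card_units_int]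

end MonoidHom

section JacobiSymbol

variable {n d : ℕ} [NeZero n]

theorem jacobiSym_val_of_intCast_eq (hdn : d ∣ n) {a : ZMod n} {x : ℤ} (hx : (x : ZMod n) = a) :
    jacobiSym a.val d = jacobiSym x d := by
  subst hx
  apply jacobiSym.mod_left'
  rw [ZMod.val_intCast, Int.emod_emod_of_dvd _ (Int.natCast_dvd_natCast.mpr hdn)]

variable (d) in
def jacobiSymHom (hdn : d ∣ n) : ZMod n →* ℤ where
  toFun a := jacobiSym a.val d
  map_one' := by
    rw [jacobiSym_val_of_intCast_eq hdn Int.cast_one, jacobiSym.one_left]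
  map_mul' a b := by
    show jacobiSym (a * b).val d = jacobiSym a.val d * jacobiSym b.val d
    rw [jacobiSym_val_of_intCast_eq hdn (x := a.val * b.val) (by simp), jacobiSym.mul_left]

theorem jacobiSymHom_apply (hdn : d ∣ n) (a : ZMod n) :
    jacobiSymHom d hdn a = jacobiSym a.val d := rfl

theorem jacobiSymHom_neg_one (hdn : d ∣ n) (hd4 : d % 4 = 3) : jacobiSymHom d hdn (-1) = -1 := by
  rw [jacobiSymHom_apply, jacobiSym_val_of_intCast_eq hdn (x := -1) (by simp),
    jacobiSym.at_neg_one (Nat.odd_iff.mpr (by omega)), ZMod.χ₄_nat_three_mod_four hd4]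

theorem jacobiSym_val_castHom {m : ℕ} [NeZero m] (hmn : m ∣ n) (hdm : d ∣ m) (a : ZMod n) :
    jacobiSym (ZMod.castHom hmn (ZMod m) a).val d = jacobiSym a.val d :=
  jacobiSym_val_of_intCast_eq hdm (by rw [ZMod.castHom_apply, ZMod.cast_eq_val, Int.cast_natCast])

end JacobiSymbol

theorem jacobi_twisted_reduction_index_two_general
    (n d m : ℕ) (hodd : Odd n)
    (hd4 : d % 4 = 3) (hmn : m ∣ n) (hdm : d ∣ m) :
    ∃ f : (ZMod n)ˣ →* (ZMod m)ˣ,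
      (∀ r : (ZMod n)ˣ, (f r : ZMod m) =
        ((jacobiSym ((r : ZMod n).val : ℤ) d : ℤ) : ZMod m) *
          (ZMod.castHom hmn (ZMod m) (r : ZMod n))) ∧
      f.range.index = 2 := by
  have : NeZero n := ⟨hodd.pos.ne'⟩
  have : NeZero m := ⟨ne_zero_of_dvd_ne_zero hodd.pos.ne' hmn⟩
  let π := ZMod.unitsMap hmn
  let ψ := Units.map (jacobiSymHom d hdm)
  let j := Units.map (Int.castRingHom (ZMod m)).toMonoidHom
  have hj : LeftInverse ψ j := fun ε ↦ by
    rcases Int.units_eq_one_or ε with rfl | rfl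
    · simp
    · ext; simpa [ψ, j] using jacobiSymHom_neg_one hdm hd4
  refine ⟨(j.comp (ψ.comp π)) * π, fun r ↦ ?_, ?_⟩
  · show ((jacobiSymHom d hdm (π r) : ℤ) : ZMod m) * (π r : ZMod m) = _
    rw [jacobiSymHom_apply, ← jacobiSym_val_castHom hmn hdm]
    rfl
  · rw [MonoidHom.range_mul_comp_eq_ker (ZMod.unitsMap_surjective hmn) hj,
      MonoidHom.index_ker_eq_two hj.surjective]

theorem jacobi_twisted_reduction_index_two
    (n d m : ℕ) (hn : 3 ≤ n) (hodd : Odd n) (hdn : d ∣ n)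
    (hsf : Squarefree d) (hd4 : d % 4 = 3) (hmn : m ∣ n) (hdm : d ∣ m) :
    ∃ f : (ZMod n)ˣ →* (ZMod m)ˣ,
      (∀ r : (ZMod n)ˣ, (f r : ZMod m) =
        ((jacobiSym ((r : ZMod n).val : ℤ) d : ℤ) : ZMod m) *
          (ZMod.castHom hmn (ZMod m) (r : ZMod n))) ∧
      f.range.index = 2 :=
  jacobi_twisted_reduction_index_two_general n d m hodd hd4 hmn hdm
end

section
/- Let n ≥ 3 be an odd integer, d a squarefree divisor of n with d ≡ 3 (mod 4), and m a divisor of n with d ∤ m. For r ∈ (ℤ/nℤ)ˣ set χ_d(r) = (r|d), the Jacobi symbol, which is well defined since d ∣ n. Then the group homomorphism f : (ℤ/nℤ)ˣ → (ℤ/mℤ)ˣ defined by f(r) = χ_d(r)·(r mod m) is surjective. -/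
/-!
Write `χ` for the character `r ↦ (r | d)` of `(ℤ/nℤ)ˣ` and `π` for reduction modulo `m`, which is
surjective. The product `χ · π` is then surjective as soon as `χ` takes the value `-1` on the
kernel of `π`. For this pick a prime `p ∣ d` with `p ∤ m`, write `d = p e` and `n = p^k t` with
`p ∤ e t`, and take `x ≡ 1 (mod t)` which is a quadratic nonresidue modulo `p`: then
`(x | d) = (x | p) (x | e) = -1` and `x ≡ 1 (mod m)`.
-/

theorem MonoidHom.mul_surjective_of_forall_exists_ker {G H : Type*} [Group G] [CommGroup H]
    {φ ψ : G →* H} (hφ : Function.Surjective φ) (hψ : ∀ g, ∃ s, φ s = 1 ∧ ψ s = ψ g) :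
    Function.Surjective (ψ * φ) := by
  intro h
  obtain ⟨g, rfl⟩ := hφ h
  obtain ⟨s, hφs, hψs⟩ := hψ g
  exact ⟨s⁻¹ * g, by simp [hφs, hψs]⟩

theorem Nat.exists_prime_dvd_not_dvd_of_squarefree {d m : ℕ} (hsf : Squarefree d)
    (hdm : ¬ d ∣ m) : ∃ p : ℕ, p.Prime ∧ p ∣ d ∧ ¬ p ∣ m := by
  by_contra! h
  refine hdm (Nat.prod_primeFactors_of_squarefree hsf ▸ Finset.prod_primes_dvd m ?_ ?_)
  · exact fun p hp => (Nat.prime_of_mem_primeFactors hp).prime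
  · exact fun p hp => h p (Nat.prime_of_mem_primeFactors hp) (Nat.dvd_of_mem_primeFactors hp)

theorem exists_jacobiSym_eq_neg_one_of_modEq_one {p N : ℕ} [Fact p.Prime] (hp : p ≠ 2)
    (hpN : ¬ p ∣ N) : ∃ x : ℤ, jacobiSym x p = -1 ∧ x ≡ 1 [ZMOD N] := by
  obtain ⟨b, hb⟩ := FiniteField.exists_nonsquare (F := ZMod p) (by rwa [ZMod.ringChar_zmod_n])
  have hN : (N : ZMod p) ≠ 0 := by rwa [Ne, ZMod.natCast_eq_zero_iff]
  refine ⟨1 + N * ((b - 1) / N : ZMod p).val, ?_, Int.add_mul_emod_self_left 1 N _⟩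
  rw [← jacobiSym.legendreSym.to_jacobiSym, legendreSym.eq_neg_one_iff]
  convert hb using 2
  push_cast
  rw [ZMod.natCast_val, ZMod.cast_id', id, mul_div_cancel₀ _ hN, add_sub_cancel]

namespace ZMod

variable {n d : ℕ}

theorem jacobiSym_val_eq_of_intCast_eq [NeZero n] (hdn : d ∣ n) {a : ZMod n} {x : ℤ}
    (h : (x : ZMod n) = a) : jacobiSym a.val d = jacobiSym x d := by
  refine jacobiSym.mod_left' (Int.ModEq.of_dvd (Int.natCast_dvd_natCast.mpr hdn) ?_)
  rw [← ZMod.intCast_eq_intCast_iff, h]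
  simp

theorem jacobiSym_val_mul [NeZero n] (hdn : d ∣ n) (a b : ZMod n) :
    jacobiSym (a * b).val d = jacobiSym a.val d * jacobiSym b.val d := by
  rw [← jacobiSym.mul_left]
  exact jacobiSym_val_eq_of_intCast_eq hdn (by push_cast; simp)

theorem isUnit_jacobiSym_val (hdn : d ∣ n) (r : (ZMod n)ˣ) :
    IsUnit (jacobiSym (r : ZMod n).val d) := by
  refine Int.isUnit_iff.mpr (jacobiSym.eq_one_or_neg_one ?_)
  simpa [Int.gcd_natCast_natCast] using (val_coe_unit_coprime r).coprime_dvd_right hdn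

noncomputable def jacobiSymUnitsHom [NeZero n] (hdn : d ∣ n) : (ZMod n)ˣ →* ℤˣ where
  toFun r := (isUnit_jacobiSym_val hdn r).unit
  map_one' := Units.ext <| by
    simpa using jacobiSym_val_eq_of_intCast_eq (x := 1) hdn Int.cast_one
  map_mul' r s := Units.ext <| by simpa using jacobiSym_val_mul hdn r s

@[simp]
theorem coe_jacobiSymUnitsHom [NeZero n] (hdn : d ∣ n) (r : (ZMod n)ˣ) :
    (jacobiSymUnitsHom hdn r : ℤ) = jacobiSym (r : ZMod n).val d :=
  rfl

theorem exists_unitsMap_eq_one_jacobiSymUnitsHom_eq_neg_one {m p : ℕ} [NeZero n]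
    (hdn : d ∣ n) (hmn : m ∣ n) (hsf : Squarefree d) (hp : p.Prime) (hp2 : p ≠ 2)
    (hpd : p ∣ d) (hpm : ¬ p ∣ m) :
    ∃ s : (ZMod n)ˣ, unitsMap hmn s = 1 ∧ jacobiSymUnitsHom hdn s = -1 := by
  have : Fact p.Prime := ⟨hp⟩
  obtain ⟨e, rfl⟩ := hpd
  have hpe : ¬ p ∣ e := hp.coprime_iff_not_dvd.mp (Nat.coprime_of_squarefree_mul hsf)
  set t := ordCompl[p] n
  obtain ⟨x, hxp, hxt⟩ := exists_jacobiSym_eq_neg_one_of_modEq_one hp2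
    (Nat.not_dvd_ordCompl hp (NeZero.ne n))
  have hxe : x ≡ 1 [ZMOD e] :=
    hxt.of_dvd (Int.natCast_dvd_natCast.mpr (Nat.dvd_ordCompl_of_dvd_not_dvd
      ((dvd_mul_left e p).trans hdn) hpe))
  have hxm : x ≡ 1 [ZMOD m] :=
    hxt.of_dvd (Int.natCast_dvd_natCast.mpr (Nat.dvd_ordCompl_of_dvd_not_dvd hmn hpm))
  have hx : IsUnit (x : ZMod n) := by
    have hxp' : IsCoprime x p := Int.isCoprime_iff_gcd_eq_one.mpr <| not_not.mp fun h => by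
      simp [jacobiSym.eq_zero_iff_not_coprime.mpr h] at hxp
    have hxt' : IsCoprime x t := by
      obtain ⟨q, hq⟩ := hxt.symm.dvd
      exact ⟨1, -q, by linear_combination hq⟩
    have hxn : IsCoprime x n := by
      rw [← Nat.ordProj_mul_ordCompl_eq_self n p]
      push_cast
      exact hxp'.pow_right.mul_right hxt'
    simpa [isCoprime_zero_right] using hxn.map (Int.castRingHom (ZMod n))
  refine ⟨hx.unit, Units.ext ?_, Units.ext ?_⟩
  · simpa [unitsMap_val, cast_intCast hmn] using (intCast_eq_intCast_iff _ _ _).mpr hxm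
  · have he0 : e ≠ 0 := by rintro rfl; simp at hsf
    simp only [coe_jacobiSymUnitsHom, IsUnit.unit_spec, Units.val_neg, Units.val_one]
    rw [jacobiSym_val_eq_of_intCast_eq hdn rfl, jacobiSym.mul_right' _ hp.ne_zero he0, hxp,
      jacobiSym.mod_left' hxe, jacobiSym.one_left, mul_one]

end ZMod

theorem jacobi_twisted_reduction_surjective_general
    (n d m : ℕ) (hodd : Odd n) (hdn : d ∣ n)
    (hsf : Squarefree d) (hmn : m ∣ n) (hdm : ¬ d ∣ m) :
    ∃ f : (ZMod n)ˣ →* (ZMod m)ˣ,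
      (∀ r : (ZMod n)ˣ, (f r : ZMod m) =
        ((jacobiSym ((r : ZMod n).val : ℤ) d : ℤ) : ZMod m) *
          (ZMod.castHom hmn (ZMod m) (r : ZMod n))) ∧
      Function.Surjective f := by
  have : NeZero n := ⟨hodd.pos.ne'⟩
  have : NeZero m := ⟨fun h => NeZero.ne n (Nat.eq_zero_of_zero_dvd (h ▸ hmn))⟩
  let χ := (Units.map (Int.castRingHom (ZMod m)).toMonoidHom).comp (ZMod.jacobiSymUnitsHom hdn)
  obtain ⟨p, hp, hpd, hpm⟩ := Nat.exists_prime_dvd_not_dvd_of_squarefree hsf hdm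
  obtain ⟨s, hs1, hs⟩ := ZMod.exists_unitsMap_eq_one_jacobiSymUnitsHom_eq_neg_one hdn hmn hsf
    hp (hodd.ne_two_of_dvd_nat (hpd.trans hdn)) hpd hpm
  refine ⟨χ * ZMod.unitsMap hmn, fun r => by simp [χ, ZMod.unitsMap_val],
    MonoidHom.mul_surjective_of_forall_exists_ker (ZMod.unitsMap_surjective hmn) fun r => ?_⟩
  rcases Int.units_eq_one_or (ZMod.jacobiSymUnitsHom hdn r) with h | h
  · exact ⟨1, map_one _, by simp [χ, h]⟩
  · exact ⟨s, hs1, by simp [χ, h, hs]⟩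

theorem jacobi_twisted_reduction_surjective
    (n d m : ℕ) (hn : 3 ≤ n) (hodd : Odd n) (hdn : d ∣ n)
    (hsf : Squarefree d) (hd4 : d % 4 = 3) (hmn : m ∣ n) (hdm : ¬ d ∣ m) :
    ∃ f : (ZMod n)ˣ →* (ZMod m)ˣ,
      (∀ r : (ZMod n)ˣ, (f r : ZMod m) =
        ((jacobiSym ((r : ZMod n).val : ℤ) d : ℤ) : ZMod m) *
          (ZMod.castHom hmn (ZMod m) (r : ZMod n))) ∧
      Function.Surjective f :=
  jacobi_twisted_reduction_surjective_general n d m hodd hdn hsf hmn hdm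
end

section
/- Let K be a number field with r₁ real embeddings and r₂ pairs of complex embeddings, and let G be a finite abelian group. Then the cardinality of the tensor product 𝒪_Kˣ ⊗_ℤ G of the unit group of the ring of integers of K with G equals |Hom(G, Kˣ)| · |G|^(r₁ + r₂ − 1), where Hom(G, Kˣ) is the (finite) group of group homomorphisms from G to the multiplicative group of K. -/
/-!
Write `T` for the finite torsion subgroup of `𝓞_Kˣ`. By Dirichlet's unit theorem
`𝓞_Kˣ / T` is free of rank `r₁ + r₂ - 1`, so the sequence `1 → T → 𝓞_Kˣ → 𝓞_Kˣ / T → 1` splits and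
`𝓞_Kˣ ⊗ A ≅ (T ⊗ A) × A ^ (r₁ + r₂ - 1)`. For finite abelian groups `M` and `B` one has
`|M ⊗ B| = |Hom(B, M)|`: by the structure theorem it suffices to take `B = ℤ/n`, where
`M ⊗ ℤ/n ≅ M / nM` and `Hom(ℤ/n, M) ≅ M[n]` are the cokernel and kernel of multiplication by `n`
on `M`, which have the same size. Finally every homomorphism from a finite group to `Kˣ` lands in
the roots of unity, and these are integral, so `Hom(A, T) = Hom(A, Kˣ)`.
-/

open NumberField NumberField.Units TensorProduct Pointwise

namespace AddCommGroup

variable (M : Type*) [AddCommGroup M]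

theorem card_tensor_zmod (n : ℕ) :
    Nat.card (M ⊗[ℤ] ZMod n) = (nsmulAddMonoidHom n : M →+ M).range.index := by
  let e : M ⊗[ℤ] ZMod n ≃ₗ[ℤ] M ⧸ (Ideal.span {(n : ℤ)} • ⊤ : Submodule ℤ M) :=
    (TensorProduct.congr (LinearEquiv.refl ℤ M)
      (Int.quotientSpanNatEquivZMod n).toAddEquiv.toIntLinearEquiv.symm).trans
      (tensorQuotEquivQuotSMul M _)
  have hrange : (Ideal.span {(n : ℤ)} • ⊤ : Submodule ℤ M).toAddSubgroup =
      (nsmulAddMonoidHom n).range := by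
    ext x
    rw [Submodule.ideal_span_singleton_smul, Submodule.mem_toAddSubgroup,
      Submodule.mem_smul_pointwise_iff_exists]
    simp
  rw [Nat.card_congr e.toEquiv, ← hrange]
  rfl

theorem card_zmod_addMonoidHom (n : ℕ) :
    Nat.card (ZMod n →+ M) = Nat.card (nsmulAddMonoidHom n : M →+ M).ker :=
  Nat.card_congr <| (ZMod.lift n).symm.trans <|
    Equiv.subtypeEquiv (zmultiplesHom M).symm fun f => by simp [← map_nsmul]

theorem card_tensor_zmod_eq_card_zmod_addMonoidHom [Finite M] (n : ℕ) :
    Nat.card (M ⊗[ℤ] ZMod n) = Nat.card (ZMod n →+ M) := by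
  rw [card_tensor_zmod, card_zmod_addMonoidHom, AddSubgroup.index_range]

theorem card_tensor_eq_card_addMonoidHom [Finite M] (B : Type*) [AddCommGroup B] [Finite B] :
    Nat.card (M ⊗[ℤ] B) = Nat.card (B →+ M) := by
  classical
  obtain ⟨ι, _, n, -, ⟨e⟩⟩ := equiv_directSum_zmod_of_finite' B
  let e' : B ≃+ ∀ i, ZMod (n i) := e.trans (DirectSum.addEquivProd _)
  calc Nat.card (M ⊗[ℤ] B) = Nat.card (∀ i, M ⊗[ℤ] ZMod (n i)) :=
        Nat.card_congr ((TensorProduct.congr (LinearEquiv.refl ℤ M) e'.toIntLinearEquiv).trans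
          (TensorProduct.piRight ℤ ℤ M _)).toEquiv
    _ = Nat.card (∀ i, ZMod (n i) →+ M) := by
        simp only [Nat.card_pi, card_tensor_zmod_eq_card_zmod_addMonoidHom]
    _ = Nat.card (B →+ M) :=
        Nat.card_congr ((Pi.addMonoidHomAddEquiv _ M).symm.trans
          (AddEquiv.addMonoidHomCongrLeft e'.symm)).toEquiv

end AddCommGroup

theorem Function.Exact.card_tensor_eq_mul {R N M Q : Type*} [CommRing R]
    [AddCommGroup N] [Module R N] [AddCommGroup M] [Module R M] [AddCommGroup Q] [Module R Q]
    [Module.Projective R Q] {f : N →ₗ[R] M} {g : M →ₗ[R] Q} (h : Function.Exact f g)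
    (hf : Function.Injective f) (hg : Function.Surjective g)
    (B : Type*) [AddCommGroup B] [Module R B] :
    Nat.card (M ⊗[R] B) = Nat.card (N ⊗[R] B) * Nat.card (Q ⊗[R] B) := by
  obtain ⟨l, hl⟩ := Module.projective_lifting_property g LinearMap.id hg
  let e : M ≃ₗ[R] N × Q := (h.splitSurjectiveEquiv hf ⟨l, hl⟩).1
  rw [← Nat.card_prod]
  exact Nat.card_congr ((TensorProduct.congr e (LinearEquiv.refl R B)).trans
    (TensorProduct.prodLeft R R N Q B)).toEquiv

theorem Module.Basis.card_tensor {R Q ι : Type*} [CommRing R] [AddCommGroup Q] [Module R Q]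
    [Fintype ι] (b : Basis ι R Q) (B : Type*) [AddCommGroup B] [Module R B] :
    Nat.card (Q ⊗[R] B) = Nat.card B ^ Nat.card ι := by
  classical
  rw [← Nat.card_fun]
  exact Nat.card_congr ((TensorProduct.congr b.equivFun (LinearEquiv.refl R B)).trans
    ((TensorProduct.comm R _ B).trans (TensorProduct.piScalarRight R R B ι))).toEquiv

theorem CommGroup.card_monoidHom_torsion (A G : Type*) [Group A] [Finite A] [CommGroup G] :
    Nat.card (A →* CommGroup.torsion G) = Nat.card (A →* G) :=
  Nat.card_congr
    { toFun := (CommGroup.torsion G).subtype.comp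
      invFun := fun f => f.codRestrict _ fun a => f.isOfFinOrder (isOfFinOrder_of_finite a)
      left_inv := fun _ => rfl
      right_inv := fun _ => rfl }

namespace NumberField.Units

variable (K : Type*) [Field K]

theorem map_torsion :
    (torsion K).map (Units.map (algebraMap (𝓞 K) K : 𝓞 K →* K)) = CommGroup.torsion Kˣ := by
  refine le_antisymm (CommGroup.map_torsion_le _) fun u hu => ?_
  obtain ⟨n, hn, hun⟩ := isOfFinOrder_iff_pow_eq_one.mp hu
  have hun' : (u : K) ^ n = 1 := by rw [← Units.val_pow_eq_pow_val, hun, Units.val_one]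
  let x : 𝓞 K := ⟨u, IsIntegral.of_pow hn (hun' ▸ isIntegral_one)⟩
  have hx : x ^ n = 1 := RingOfIntegers.ext hun'
  refine ⟨Units.ofPowEqOne x n hx hn.ne', ?_, Units.ext rfl⟩
  exact isOfFinOrder_iff_pow_eq_one.mpr ⟨n, hn, Units.pow_ofPowEqOne hx hn.ne'⟩

noncomputable def torsionMulEquiv : torsion K ≃* CommGroup.torsion Kˣ :=
  ((torsion K).equivMapOfInjective _ (Units.map_injective RingOfIntegers.coe_injective)).trans
    (MulEquiv.subgroupCongr (map_torsion K))

theorem card_monoidHom_torsion (A : Type*) [Group A] [Finite A] :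
    Nat.card (A →* torsion K) = Nat.card (A →* Kˣ) := by
  rw [← CommGroup.card_monoidHom_torsion A Kˣ]
  exact Nat.card_congr (MulEquiv.monoidHomCongrRight (torsionMulEquiv K)).toEquiv

variable [NumberField K]

-- Mathlib's own `maxSynthPendingDepth` is needed to find the `ℤ`-module
-- `Additive ((𝓞 K)ˣ ⧸ torsion K)`.
set_option maxSynthPendingDepth 2 in
theorem card_tensor (B : Type*) [AddCommGroup B] :
    Nat.card (Additive (𝓞 K)ˣ ⊗[ℤ] B) =
      Nat.card (Additive (torsion K) ⊗[ℤ] B) * Nat.card B ^ rank K := by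
  let f : Additive (torsion K) →ₗ[ℤ] Additive (𝓞 K)ˣ :=
    (torsion K).subtype.toAdditive.toIntLinearMap
  let g : Additive (𝓞 K)ˣ →ₗ[ℤ] Additive ((𝓞 K)ˣ ⧸ torsion K) :=
    (QuotientGroup.mk' (torsion K)).toAdditive.toIntLinearMap
  have hexact : Function.Exact f g := fun y => by
    simpa [f, g] using ⟨fun h => ⟨_, h, rfl⟩, by rintro ⟨a, ha, rfl⟩; exact ha⟩
  have := Module.Projective.of_basis (basisModTorsion K)
  rw [hexact.card_tensor_eq_mul Subtype.val_injective
      fun q => QuotientGroup.mk'_surjective (torsion K) q.toMul,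
    (basisModTorsion K).card_tensor, Nat.card_fin]

end NumberField.Units

theorem card_units_tensor_finite_abelian
    (K : Type*) [Field K] [NumberField K] (A : Type*) [CommGroup A] [Finite A]
    (r₁ r₂ : ℕ)
    (hr₁ : r₁ = Nat.card {w : NumberField.InfinitePlace K // w.IsReal})
    (hr₂ : r₂ = Nat.card {w : NumberField.InfinitePlace K // w.IsComplex}) :
    Nat.card
        (TensorProduct ℤ (Additive ((NumberField.RingOfIntegers K)ˣ)) (Additive A)) =
      Nat.card (A →* Kˣ) * Nat.card A ^ (r₁ + r₂ - 1) := by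
  have hrank : r₁ + r₂ - 1 = rank K := by
    classical
    simp only [hr₁, hr₂, rank, InfinitePlace.card_eq_nrRealPlaces_add_nrComplexPlaces,
      Nat.card_eq_fintype_card]
  calc _ = Nat.card (Additive (torsion K) ⊗[ℤ] Additive A) * Nat.card A ^ rank K :=
        card_tensor K (Additive A)
    _ = Nat.card (A →* torsion K) * Nat.card A ^ rank K := by
        rw [AddCommGroup.card_tensor_eq_card_addMonoidHom,
          Nat.card_congr MonoidHom.toAdditive.symm]
    _ = Nat.card (A →* Kˣ) * Nat.card A ^ (r₁ + r₂ - 1) := by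
        rw [card_monoidHom_torsion, hrank]
end

section
/- Let C be a finite cyclic group with generator σ acting by group automorphisms on a finite abelian group N, and let M = Hom(N, ℚ/ℤ) carry the contragredient action (τ·f)(x) = f(τ⁻¹·x). Let ψ : C → M be a 1-cocycle, i.e. ψ(τυ) = ψ(τ) + τ·ψ(υ) for all τ, υ ∈ C. Then ψ is a coboundary — that is, there exists f ∈ M with ψ(τ) = τ·f − f for all τ ∈ C — if and only if ψ(σ)(x) = 0 for every x ∈ N fixed by σ. -/
/-! A cocycle on a cyclic group is determined by its value at the generator, so `ψ` is the
coboundary of `f` as soon as `ψ σ = f ∘ (σ⁻¹ - 1)`. The hypothesis says that `ψ σ` vanishes on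
`ker (σ⁻¹ - 1)`, the `σ`-invariants, so `ψ σ` factors through the image of `σ⁻¹ - 1`; it then
extends to all of `N` because `ℚ/ℤ` is divisible, hence an injective `ℤ`-module. -/

theorem Module.Baer.exists_comp_eq_of_ker_le {A B Q : Type*} [AddCommGroup A] [AddCommGroup B]
    [AddCommGroup Q] (hQ : Module.Baer ℤ Q) (T : A →+ B) (c : A →+ Q) (h : T.ker ≤ c.ker) :
    ∃ g : B →+ Q, g.comp T = c := by
  let c' : T.range →+ Q := T.rangeRestrict.liftOfSurjective T.rangeRestrict_surjective
    ⟨c, T.ker_rangeRestrict ▸ h⟩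
  obtain ⟨g, hg⟩ := hQ.extension_property_addMonoidHom T.range.subtype Subtype.val_injective c'
  refine ⟨g, AddMonoidHom.ext fun x => ?_⟩
  calc g (T x) = c' (T.rangeRestrict x) := DFunLike.congr_fun hg (T.rangeRestrict x)
    _ = c x := T.rangeRestrict.liftOfRightInverse_comp_apply _ _ _ _

section Cocycle

variable {C N A : Type*} [Group C] [MulAction C N] [AddGroup A]

/-- The cocycle condition for `C` acting on functions `N → A` by `(τ • φ) x = φ (τ⁻¹ • x)`. -/
def IsContragredientCocycle (φ : C → N → A) : Prop :=
  ∀ τ υ x, φ (τ * υ) x = φ τ x + φ υ (τ⁻¹ • x)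

namespace IsContragredientCocycle

variable {φ ψ : C → N → A}

theorem map_one (hφ : IsContragredientCocycle φ) : φ 1 = 0 := by
  funext x
  simpa using hφ 1 1 x

def eqLocus (hφ : IsContragredientCocycle φ) (hψ : IsContragredientCocycle ψ) : Subgroup C where
  carrier := {τ | φ τ = ψ τ}
  one_mem' := hφ.map_one.trans hψ.map_one.symm
  mul_mem' {τ υ} hτ hυ := by
    funext x
    rw [hφ, hψ, hτ, hυ]
  inv_mem' {τ} hτ := by
    funext y
    have hφτ := hφ τ τ⁻¹ (τ • y)
    have hψτ := hψ τ τ⁻¹ (τ • y)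
    rw [mul_inv_cancel, inv_smul_smul, hφ.map_one] at hφτ
    rw [mul_inv_cancel, inv_smul_smul, hψ.map_one, ← hτ] at hψτ
    exact add_left_cancel (hφτ.symm.trans hψτ)

theorem eq_of_mem_zpowers (hφ : IsContragredientCocycle φ) (hψ : IsContragredientCocycle ψ)
    {σ τ : C} (hσ : φ σ = ψ σ) (hτ : τ ∈ Subgroup.zpowers σ) : φ τ = ψ τ :=
  (Subgroup.zpowers_le (H := eqLocus hφ hψ)).mpr hσ hτ

end IsContragredientCocycle

theorem isContragredientCocycle_coboundary {A : Type*} [AddCommGroup A] (f : N → A) :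
    IsContragredientCocycle fun (τ : C) x => f (τ⁻¹ • x) - f x := by
  intro τ υ x
  simp only [mul_inv_rev, mul_smul]
  abel

end Cocycle

theorem cyclic_cocycle_is_coboundary_iff_general
    (C N : Type*) [Group C] [AddCommGroup N]
    [DistribMulAction C N]
    (σ : C) (hσ : ∀ c : C, c ∈ Subgroup.zpowers σ)
    (ψ : C → (N →+ (ℚ ⧸ AddSubgroup.zmultiples (1 : ℚ))))
    (hψ : ∀ τ υ : C, ∀ x : N, ψ (τ * υ) x = ψ τ x + ψ υ (τ⁻¹ • x)) :
    (∃ f : N →+ (ℚ ⧸ AddSubgroup.zmultiples (1 : ℚ)),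
        ∀ τ : C, ∀ x : N, ψ τ x = f (τ⁻¹ • x) - f x) ↔
      ∀ x : N, σ • x = x → ψ σ x = 0 := by
  constructor
  · rintro ⟨f, hf⟩ x hx
    rw [hf σ x, inv_smul_eq_iff.mpr hx.symm, sub_self]
  · intro h
    let T : N →+ N := DistribSMul.toAddMonoidHom N σ⁻¹ - AddMonoidHom.id N
    have hker : T.ker ≤ (ψ σ).ker := fun x hx =>
      h x (inv_smul_eq_iff.mp (sub_eq_zero.mp hx)).symm
    obtain ⟨f, hf⟩ := (Module.Baer.of_divisible _).exists_comp_eq_of_ker_le T (ψ σ) hker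
    have hσf : ⇑(ψ σ) = fun x => f (σ⁻¹ • x) - f x := by
      funext x
      rw [← hf]
      simp [T]
    refine ⟨f, fun τ => congrFun ?_⟩
    exact IsContragredientCocycle.eq_of_mem_zpowers (φ := fun τ => ⇑(ψ τ)) hψ
      (isContragredientCocycle_coboundary f) hσf (hσ τ)

theorem cyclic_cocycle_is_coboundary_iff
    (C N : Type*) [Group C] [Finite C] [AddCommGroup N] [Finite N]
    [DistribMulAction C N]
    (σ : C) (hσ : ∀ c : C, c ∈ Subgroup.zpowers σ)
    (ψ : C → (N →+ (ℚ ⧸ AddSubgroup.zmultiples (1 : ℚ))))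
    (hψ : ∀ τ υ : C, ∀ x : N, ψ (τ * υ) x = ψ τ x + ψ υ (τ⁻¹ • x)) :
    (∃ f : N →+ (ℚ ⧸ AddSubgroup.zmultiples (1 : ℚ)),
        ∀ τ : C, ∀ x : N, ψ τ x = f (τ⁻¹ • x) - f x) ↔
      ∀ x : N, σ • x = x → ψ σ x = 0 :=
  cyclic_cocycle_is_coboundary_iff_general C N σ hσ ψ hψ
end
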